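/- arXiv:2010.11789 — 2 statements merged into one kernel-verified Lean document; each statement's English description precedes it below -/
import Mathlib

section
/- Assume (HS1) and (HS2) hold and pick r̄ ∈ (0,1) so that (HS3_r̄), (HW1_r̄) and (HW2_r̄) are satisfied, and fix integers 1 ≤ k ≤ 6 and q ≥ 1. Then there exists a constant C1 > 0 such that for every M ∈ ℳ_q, every 0 < δ < 1, and every Φ ∈ ℋ¹_{k,M}, setting Ψ = 𝒦_{k,M}Φ + δΦ, one has 2‖Ψ‖²_{ℋ_M} + 2C1‖Φ‖²_{ℋ_M} ≥ c̄0² ‖D_{k,M}Φ‖²_{ℋ_M}. -/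
open MeasureTheory Filter Topology

noncomputable section

/-- Vectors in `ℝ^d`. -/
abbrev Vec (d : ℕ) := Fin d → ℝ

/-- Vectors in `ℂ^d`. -/
abbrev VecC (d : ℕ) := Fin d → ℂ

variable {d : ℕ}

/-- Euclidean dot product on `ℝ^d`. -/
def dotV {d : ℕ} (x y : Vec d) : ℝ := ∑ i, x i * y i

/-- The spatial mixed-difference operator `Δ₀` with (diagonal) coefficients `α` and constant `τ`:
`(Δ₀ F)(ξ) = τ Σ_{m>0} α_m [F(ξ+m) + F(ξ-m) - 2 F(ξ)]`. -/
def Δ0op {d : ℕ} (τ : ℝ) (α : ℕ → Vec d) (F : ℝ → Vec d) : ℝ → Vec d :=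
  fun ξ i => τ * ∑' m : ℕ, α (m + 1) i *
    (F (ξ + ((m : ℝ) + 1)) i + F (ξ - ((m : ℝ) + 1)) i - 2 * F ξ i)

/-- Complexification of `Δ₀`. -/
def Δ0opC {d : ℕ} (τ : ℝ) (α : ℕ → Vec d) (F : ℝ → VecC d) : ℝ → VecC d :=
  fun ξ i => (τ : ℂ) * ∑' m : ℕ, ((α (m + 1) i : ℝ) : ℂ) *
    (F (ξ + ((m : ℝ) + 1)) i + F (ξ - ((m : ℝ) + 1)) i - 2 * F ξ i)

/-- Assumption (HS1).  The matrices `α_m` are encoded by their diagonals `α m : ℝ^d`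
(indexed so that `α (m+1)` is the coefficient `α_{m+1}`, `m ≥ 0`). -/
structure HS1 (d ddiff : ℕ) (τ : ℝ) (α : ℕ → Vec d) (ν : ℝ) : Prop where
  τ_pos : 0 < τ
  ddiff_pos : 1 ≤ ddiff
  ddiff_le : ddiff ≤ d
  ν_pos : 0 < ν
  diff_nonzero : ∀ i : Fin d, (i : ℕ) < ddiff → ∃ m : ℕ, α (m + 1) i ≠ 0
  nondiff_zero : ∀ i : Fin d, ddiff ≤ (i : ℕ) → ∀ m : ℕ, α (m + 1) i = 0
  exp_summable : Summable (fun m : ℕ => ‖α (m + 1)‖ * Real.exp (((m : ℝ) + 1) * ν))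
  second_moment : ∀ i : Fin d, (i : ℕ) < ddiff →
    ∑' m : ℕ, α (m + 1) i * ((m : ℝ) + 1) ^ 2 = 1
  A_pos : ∀ i : Fin d, (i : ℕ) < ddiff → ∀ z : ℝ, 0 < z → z < 2 * Real.pi →
    0 < ∑' m : ℕ, α (m + 1) i * (1 - Real.cos (((m : ℝ) + 1) * z))

/-- Assumption (HS2): `G : ℝ^d × (0,1) → ℝ^d` is `C²` and `G(P^±; r) = 0` for all `r ∈ (0,1)`. -/
structure HS2 (d : ℕ) (G : Vec d → ℝ → Vec d) (Pm Pp : Vec d) : Prop where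
  smooth : ContDiffOn ℝ 2 (fun z : Vec d × ℝ => G z.1 z.2) (Set.univ ×ˢ Set.Ioo (0:ℝ) 1)
  zero_m : ∀ r ∈ Set.Ioo (0:ℝ) 1, G Pm r = 0
  zero_p : ∀ r ∈ Set.Ioo (0:ℝ) 1, G Pp r = 0

/-- The Jacobian `D_U G(U; r)` as a `d × d` matrix. -/
def DUG {d : ℕ} (G : Vec d → ℝ → Vec d) (U : Vec d) (r : ℝ) : Matrix (Fin d) (Fin d) ℝ :=
  fun i j => fderiv ℝ (fun V => G V r i) U (Pi.single j 1)

/-- A (not necessarily symmetric) real matrix is positive definite if `xᵀ M x > 0` for `x ≠ 0`. -/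
def PosDefQ {d : ℕ} (M : Matrix (Fin d) (Fin d) ℝ) : Prop :=
  ∀ x : Vec d, x ≠ 0 → 0 < dotV x (M.mulVec x)

/-- `x` is supported in the first `ddiff` coordinates. -/
def SuppFirst (d ddiff : ℕ) (x : Vec d) : Prop := ∀ i : Fin d, ddiff ≤ (i : ℕ) → x i = 0

/-- `x` is supported in the last `d - ddiff` coordinates. -/
def SuppLast (d ddiff : ℕ) (x : Vec d) : Prop := ∀ i : Fin d, (i : ℕ) < ddiff → x i = 0

/-- Alternative (a) of assumption (HS3). -/
def HS3a {d : ℕ} (G : Vec d → ℝ → Vec d) (Pm Pp : Vec d) (r : ℝ) : Prop :=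
  PosDefQ (-(DUG G Pm r)) ∧ PosDefQ (-(DUG G Pp r))

/-- Alternative (b) of assumption (HS3): the blocks `−G^{[1,1]}(P^±)` and `−G^{[2,2]}(P^±)` are
positive definite (expressed via vectors supported on the corresponding blocks) and
`G^{[1,2]}(U) = −Γ G^{[2,1]}(U)ᵀ` for some `Γ > 0`. -/
def HS3b {d : ℕ} (ddiff : ℕ) (G : Vec d → ℝ → Vec d) (Pm Pp : Vec d) (r : ℝ) : Prop :=
  (∀ P ∈ ({Pm, Pp} : Set (Vec d)),
    (∀ x : Vec d, x ≠ 0 → SuppFirst d ddiff x → 0 < dotV x ((-(DUG G P r)).mulVec x)) ∧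
    (∀ x : Vec d, x ≠ 0 → SuppLast d ddiff x → 0 < dotV x ((-(DUG G P r)).mulVec x))) ∧
  ∃ Γ : ℝ, 0 < Γ ∧ ∀ U : Vec d, ∀ i j : Fin d, (i : ℕ) < ddiff → ddiff ≤ (j : ℕ) →
    DUG G U r i j = -Γ * DUG G U r j i

/-- Assumption (HS3): one of the two alternatives holds. -/
def HS3 {d : ℕ} (ddiff : ℕ) (G : Vec d → ℝ → Vec d) (Pm Pp : Vec d) (r : ℝ) : Prop :=
  HS3a G Pm Pp r ∨ HS3b ddiff G Pm Pp r

/-- `F ∈ H¹(ℝ; ℝ^d)` with (a.e./weak) derivative `F'`: `F` is an indefinite integral of `F'`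
and both belong to `L²`. -/
structure IsH1 {d : ℕ} (F F' : ℝ → Vec d) : Prop where
  fund : ∀ a b : ℝ, F b - F a = ∫ t in a..b, F' t
  memF : MemLp F 2 volume
  memF' : MemLp F' 2 volume

/-- Complex version of `IsH1`. -/
structure IsH1C {d : ℕ} (F F' : ℝ → VecC d) : Prop where
  fund : ∀ a b : ℝ, F b - F a = ∫ t in a..b, F' t
  memF : MemLp F 2 volume
  memF' : MemLp F' 2 volume

/-- The `L²(ℝ;ℝ^d)` pairing. -/
def innerL2 {d : ℕ} (F G : ℝ → Vec d) : ℝ := ∫ ξ : ℝ, dotV (F ξ) (G ξ)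

/-- The operator `L₀ F = c̄₀ F' − Δ₀ F − D_U G(Ū₀(·); r̄) F`, evaluated on a pair `(F, F')`. -/
def L0op {d : ℕ} (τ c0 : ℝ) (α : ℕ → Vec d) (G : Vec d → ℝ → Vec d) (U0 : ℝ → Vec d)
    (r : ℝ) (F F' : ℝ → Vec d) : ℝ → Vec d :=
  fun ξ => c0 • F' ξ - Δ0op τ α F ξ - (DUG G (U0 ξ) r).mulVec (F ξ)

/-- The formal adjoint `L₀* F = −c̄₀ F' − Δ₀ F − D_U G(Ū₀(·); r̄)ᵀ F`. -/
def L0starop {d : ℕ} (τ c0 : ℝ) (α : ℕ → Vec d) (G : Vec d → ℝ → Vec d) (U0 : ℝ → Vec d)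
    (r : ℝ) (F F' : ℝ → Vec d) : ℝ → Vec d :=
  fun ξ => (-c0) • F' ξ - Δ0op τ α F ξ - (DUG G (U0 ξ) r).transpose.mulVec (F ξ)

/-- Complexification of `L₀ + λ`. -/
def L0opC {d : ℕ} (τ c0 : ℝ) (α : ℕ → Vec d) (G : Vec d → ℝ → Vec d) (U0 : ℝ → Vec d)
    (r : ℝ) (lam : ℂ) (F F' : ℝ → VecC d) : ℝ → VecC d :=
  fun ξ i => (c0 : ℂ) * F' ξ i - Δ0opC τ α F ξ i
    - ∑ j, ((DUG G (U0 ξ) r i j : ℝ) : ℂ) * F ξ j + lam * F ξ i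

/-- Bijectivity (in the a.e. sense) of the complexification of `L₀ + λ` from `H¹` to `L²`. -/
def L0CBijective {d : ℕ} (τ c0 : ℝ) (α : ℕ → Vec d) (G : Vec d → ℝ → Vec d)
    (U0 : ℝ → Vec d) (r : ℝ) (lam : ℂ) : Prop :=
  (∀ H : ℝ → VecC d, MemLp H 2 volume →
    ∃ F F' : ℝ → VecC d, IsH1C F F' ∧
      ∀ᵐ ξ ∂(volume : Measure ℝ), L0opC τ c0 α G U0 r lam F F' ξ = H ξ) ∧
  (∀ F F' : ℝ → VecC d, IsH1C F F' →
    (∀ᵐ ξ ∂(volume : Measure ℝ), L0opC τ c0 α G U0 r lam F F' ξ = 0) →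
    (∀ᵐ ξ ∂(volume : Measure ℝ), F ξ = 0))

/-- Assumption (HW1): existence of the travelling wave `(c̄₀, Ū₀)` for the LDE, with
`Ū₀' = U0'` its (continuous) derivative. -/
structure HW1 {d : ℕ} (τ : ℝ) (α : ℕ → Vec d) (G : Vec d → ℝ → Vec d) (Pm Pp : Vec d)
    (r c0 : ℝ) (U0 U0' : ℝ → Vec d) : Prop where
  c0_ne : c0 ≠ 0
  deriv : ∀ ξ : ℝ, HasDerivAt U0 (U0' ξ) ξ
  cont_deriv : Continuous U0'
  bounded : ∃ C : ℝ, ∀ ξ : ℝ, ‖U0 ξ‖ ≤ C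
  eqn : ∀ ξ : ℝ, c0 • U0' ξ = Δ0op τ α U0 ξ + G (U0 ξ) r
  lim_p : Tendsto U0 atTop (nhds Pp)
  lim_m : Tendsto U0 atBot (nhds Pm)

/-- Assumption (HW2): the spectral stability assumption on `L₀`. -/
structure HW2 {d : ℕ} (τ c0 : ℝ) (α : ℕ → Vec d) (G : Vec d → ℝ → Vec d)
    (U0 U0' : ℝ → Vec d) (r : ℝ) (Φp Φp' Φm Φm' : ℝ → Vec d) (lamT : ℝ) : Prop where
  lamT_pos : 0 < lamT
  h1p : IsH1 Φp Φp'
  h1m : IsH1 Φm Φm'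
  eq_deriv : Φp = U0'
  normalisation : innerL2 Φp Φm = 1
  spec : ∀ lam : ℂ, -lamT ≤ lam.re →
    (L0CBijective τ c0 α G U0 r lam ↔
      ¬ ∃ m : ℤ, lam = 2 * Real.pi * Complex.I * c0 * m)
  eig : ∀ lam : ℂ, (∃ m : ℤ, lam = 2 * Real.pi * Complex.I * c0 * m) →
    ∃ F F' : ℝ → VecC d, IsH1C F F' ∧ ¬ (∀ᵐ ξ ∂(volume : Measure ℝ), F ξ = 0) ∧
      ∀ᵐ ξ ∂(volume : Measure ℝ), L0opC τ c0 α G U0 r lam F F' ξ = 0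
  kerL0 : ∀ F F' : ℝ → Vec d, IsH1 F F' →
    ((∀ᵐ ξ ∂(volume : Measure ℝ), L0op τ c0 α G U0 r F F' ξ = 0) ↔
      ∃ c : ℝ, ∀ᵐ ξ ∂(volume : Measure ℝ), F ξ = c • Φp ξ)
  kerL0star : ∀ F F' : ℝ → Vec d, IsH1 F F' →
    ((∀ᵐ ξ ∂(volume : Measure ℝ), L0starop τ c0 α G U0 r F F' ξ = 0) ↔
      ∃ c : ℝ, ∀ᵐ ξ ∂(volume : Measure ℝ), F ξ = c • Φm ξ)
  kerL0_perp : ∀ g : ℝ → Vec d, MemLp g 2 volume →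
    ((∀ F F' : ℝ → Vec d, IsH1 F F' → innerL2 g (L0starop τ c0 α G U0 r F F') = 0) ↔
      ∃ c : ℝ, ∀ᵐ ξ ∂(volume : Measure ℝ), g ξ = c • Φp ξ)
  kerL0star_perp : ∀ g : ℝ → Vec d, MemLp g 2 volume →
    ((∀ F F' : ℝ → Vec d, IsH1 F F' → innerL2 g (L0op τ c0 α G U0 r F F') = 0) ↔
      ∃ c : ℝ, ∀ᵐ ξ ∂(volume : Measure ℝ), g ξ = c • Φm ξ)

/-! ### Exponentially weighted spaces `BC_{-η}` -/

/-- Membership in `BC_{-η}(ℝ;ℝ^d)`: continuous with `sup_ξ e^{η|ξ|}‖F(ξ)‖ < ∞`. -/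
def MemBC {d : ℕ} (η : ℝ) (F : ℝ → Vec d) : Prop :=
  Continuous F ∧ BddAbove (Set.range fun ξ : ℝ => Real.exp (η * |ξ|) * ‖F ξ‖)

/-- The `BC_{-η}` norm `sup_ξ e^{η|ξ|}‖F(ξ)‖`. -/
def BCnorm {d : ℕ} (η : ℝ) (F : ℝ → Vec d) : ℝ := ⨆ ξ : ℝ, Real.exp (η * |ξ|) * ‖F ξ‖

/-- Membership in `BC¹_{-η}(ℝ;ℝ^d)` of `F` with derivative `F'`. -/
def MemBC1 {d : ℕ} (η : ℝ) (F F' : ℝ → Vec d) : Prop :=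
  (∀ ξ : ℝ, HasDerivAt F (F' ξ) ξ) ∧ Continuous F' ∧
  BddAbove (Set.range fun ξ : ℝ => Real.exp (η * |ξ|) * (‖F ξ‖ + ‖F' ξ‖))

/-- The `BC¹_{-η}` norm `sup_ξ e^{η|ξ|}(‖F(ξ)‖ + ‖F'(ξ)‖)`. -/
def BC1norm {d : ℕ} (η : ℝ) (F F' : ℝ → Vec d) : ℝ :=
  ⨆ ξ : ℝ, Real.exp (η * |ξ|) * (‖F ξ‖ + ‖F' ξ‖)

/-! ### BDF coefficients -/

/-- Backward difference `(∂v)(n) = v(n) − v(n−1)`. -/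
def bdiff (v : ℤ → ℝ) : ℤ → ℝ := fun n => v n - v (n - 1)

/-- `(μ, β)` are the order-`k` BDF coefficients: for every scalar sequence `v`,
`Σ_{n=0}^k μ_n v(n−k) = Σ_{n'=1}^k (∂^{n'} v)(0)`, and `β = Σ_{n=1}^k n μ_n`. -/
def BDFcoeff (k : ℕ) (μ : ℕ → ℝ) (β : ℝ) : Prop :=
  (∀ v : ℤ → ℝ, ∑ n ∈ Finset.range (k + 1), μ n * v ((n : ℤ) - (k : ℤ))
      = ∑ n' ∈ Finset.Icc 1 k, (bdiff^[n'] v) 0) ∧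
  β = ∑ n ∈ Finset.Icc 1 k, (n : ℝ) * μ n

/-! ### The grid space `𝒴_M` (functions on `p⁻¹ℤ`, indexed by `ℤ`) -/

/-- Inner product on `𝒴_M = ℓ²_p(ℝ^d)`: `⟨V,W⟩ = p⁻¹ Σ_{j∈ℤ} ⟨V_j, W_j⟩`. -/
def innerY {d : ℕ} (p : ℕ) (V W : ℤ → Vec d) : ℝ := ((p : ℝ))⁻¹ * ∑' j : ℤ, dotV (V j) (W j)

/-- Membership in `𝒴_M = ℓ²_p(ℝ^d)`. -/
def MemY {d : ℕ} (V : ℤ → Vec d) : Prop := Summable fun j : ℤ => dotV (V j) (V j)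

/-- Norm on `𝒴_M`. -/
def normY {d : ℕ} (p : ℕ) (V : ℤ → Vec d) : ℝ := Real.sqrt (innerY p V V)

/-- Norm on `𝒴¹_{k,M}` (with `DV` the discrete derivative of `V`). -/
def normY1 {d : ℕ} (p : ℕ) (V DV : ℤ → Vec d) : ℝ :=
  Real.sqrt (innerY p V V + innerY p DV DV)

/-- The discrete BDF derivative `D_{k,M}` on the grid `p⁻¹ℤ` (a shift by `M⁻¹` is `q` grid
steps, with `M = p/q`). -/
def DkY {d : ℕ} (k : ℕ) (μ : ℕ → ℝ) (β M : ℝ) (q : ℕ) (V : ℤ → Vec d) : ℤ → Vec d :=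
  fun j => β⁻¹ • M • ∑ n' ∈ Finset.range (k + 1), μ n' • V (j - ((k : ℤ) - (n' : ℤ)) * q)

/-- The operator `Δ₀` on the grid `p⁻¹ℤ` (a shift by `m ∈ ℤ_{>0}` is `m·p` grid steps). -/
def Δ0Y {d : ℕ} (τ : ℝ) (α : ℕ → Vec d) (p : ℕ) (V : ℤ → Vec d) : ℤ → Vec d :=
  fun j i => τ * ∑' m : ℕ, α (m + 1) i *
    (V (j + ((m : ℤ) + 1) * p) i + V (j - ((m : ℤ) + 1) * p) i - 2 * V j i)

/-- The linearised fully discrete operator `L_{k,M} : 𝒴¹_{k,M} → 𝒴_M`. -/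
def LkMop {d : ℕ} (τ c0 : ℝ) (α : ℕ → Vec d) (G : Vec d → ℝ → Vec d) (U0 : ℝ → Vec d)
    (r : ℝ) (k : ℕ) (μ : ℕ → ℝ) (β : ℝ) (p q : ℕ) (V : ℤ → Vec d) : ℤ → Vec d :=
  fun j => c0 • DkY k μ β ((p : ℝ) / q) q V j - Δ0Y τ α p V j
    - (DUG G (U0 ((j : ℝ) / p)) r).mulVec (V j)

/-- Restriction of a continuum function to the grid `p⁻¹ℤ`. -/
def restrY {d : ℕ} (p : ℕ) (f : ℝ → Vec d) : ℤ → Vec d := fun j => f ((j : ℝ) / p)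

/-! ### The spaces `ℓ²_{q,⊥}`, `ℋ_M` and the associated operators -/

/-- The `ℓ²_{q,⊥}` inner product on maps `q⁻¹{0,…,q} → ℝ^d` (indexed by `Fin (q+1)`). -/
def innerPerp {d : ℕ} (q : ℕ) (Φ Ψ : Fin (q + 1) → Vec d) : ℝ :=
  (q : ℝ)⁻¹ * ((1 / 2) * dotV (Φ 0) (Ψ 0) + (1 / 2) * dotV (Φ (Fin.last q)) (Ψ (Fin.last q))
    + ∑ ζ ∈ Finset.Ioo (0 : Fin (q + 1)) (Fin.last q), dotV (Φ ζ) (Ψ ζ))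

/-- Index reduction `ℤ → Fin (q+1)` by the representative in `{0,…,q−1}`. -/
def zmodIdx (q : ℕ) (hq : 0 < q) (j : ℤ) : Fin (q + 1) :=
  ⟨(j % (q : ℤ)).toNat, by
    have h2 : j % (q : ℤ) < (q : ℤ) := Int.emod_lt_of_pos j (by exact_mod_cast hq)
    have h1 : 0 ≤ j % (q : ℤ) := Int.emod_nonneg j (by exact_mod_cast hq.ne')
    omega⟩

/-- Extension of an element of `ℋ_M` to all `ζ ∈ q⁻¹ℤ` via the convention
`Φ(ζ±1, ξ) = Φ(ζ, ξ±M⁻¹)`; here `j` is the `ζ`-index in units of `q⁻¹` and `l` the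
`ξ`-index in units of `M⁻¹`. -/
def extH {d : ℕ} (q : ℕ) (hq : 0 < q) (Φ : Fin (q + 1) → ℤ → Vec d) : ℤ → ℤ → Vec d :=
  fun j l => Φ (zmodIdx q hq j) (l + j / (q : ℤ))

/-- The compatibility constraint for `ℋ_M`: `Φ(1,ξ) = Φ(0, ξ + M⁻¹)`. -/
def HConstraint {d : ℕ} (q : ℕ) (Φ : Fin (q + 1) → ℤ → Vec d) : Prop :=
  ∀ l : ℤ, Φ (Fin.last q) l = Φ 0 (l + 1)

/-- Inner product on `ℋ_M`. -/
def innerH {d : ℕ} (q : ℕ) (M : ℝ) (Φ Ψ : Fin (q + 1) → ℤ → Vec d) : ℝ :=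
  M⁻¹ * ∑' l : ℤ, innerPerp q (fun ζ => Φ ζ l) (fun ζ => Ψ ζ l)

/-- Membership in `ℋ_M`. -/
def MemH {d : ℕ} (q : ℕ) (Φ : Fin (q + 1) → ℤ → Vec d) : Prop :=
  Summable fun l : ℤ => innerPerp q (fun ζ => Φ ζ l) (fun ζ => Φ ζ l)

/-- Norm on `ℋ_M`. -/
def normH {d : ℕ} (q : ℕ) (M : ℝ) (Φ : Fin (q + 1) → ℤ → Vec d) : ℝ :=
  Real.sqrt (innerH q M Φ Φ)

/-- The BDF discrete derivative on `ℋ_M`, acting in the second variable. -/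
def DkH {d : ℕ} (q k : ℕ) (μ : ℕ → ℝ) (β M : ℝ) (Φ : Fin (q + 1) → ℤ → Vec d) :
    Fin (q + 1) → ℤ → Vec d :=
  fun ζ l => β⁻¹ • M • ∑ n' ∈ Finset.range (k + 1), μ n' • Φ ζ (l - ((k : ℤ) - (n' : ℤ)))

/-- The adjoint BDF discrete derivative on `ℋ_M`. -/
def DkHstar {d : ℕ} (q k : ℕ) (μ : ℕ → ℝ) (β M : ℝ) (Φ : Fin (q + 1) → ℤ → Vec d) :
    Fin (q + 1) → ℤ → Vec d :=
  fun ζ l => β⁻¹ • M • ∑ n' ∈ Finset.range (k + 1), μ n' • Φ ζ (l + ((k : ℤ) - (n' : ℤ)))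

/-- Norm on `ℋ¹_{k,M}`. -/
def normH1 {d : ℕ} (q k : ℕ) (μ : ℕ → ℝ) (β M : ℝ) (Φ : Fin (q + 1) → ℤ → Vec d) : ℝ :=
  Real.sqrt (innerH q M Φ Φ + innerH q M (DkH q k μ β M Φ) (DkH q k μ β M Φ))

/-- The operator `Δ_M` on `ℋ_M`, with twist data `t = θq ∈ {1,…,q}` and `n` satisfying
`p = nq + t`, i.e. `1 = (n+θ)M⁻¹`. -/
def ΔMop {d : ℕ} (q : ℕ) (hq : 0 < q) (τ : ℝ) (α : ℕ → Vec d) (t n : ℤ)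
    (Φ : Fin (q + 1) → ℤ → Vec d) : Fin (q + 1) → ℤ → Vec d :=
  fun ζ l i => τ * ∑' m : ℕ, α (m + 1) i *
    (extH q hq Φ (((ζ : ℕ) : ℤ) + ((m : ℤ) + 1) * t) (l + ((m : ℤ) + 1) * n) i
      + extH q hq Φ (((ζ : ℕ) : ℤ) - ((m : ℤ) + 1) * t) (l - ((m : ℤ) + 1) * n) i
      - 2 * Φ ζ l i)

/-- The fully discrete linearised operator `𝒦_{k,M} : ℋ¹_{k,M} → ℋ_M`. -/
def KkM {d : ℕ} (q : ℕ) (hq : 0 < q) (τ c0 : ℝ) (α : ℕ → Vec d) (G : Vec d → ℝ → Vec d)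
    (U0 : ℝ → Vec d) (r : ℝ) (k : ℕ) (μ : ℕ → ℝ) (β : ℝ) (p : ℕ) (t n : ℤ)
    (Φ : Fin (q + 1) → ℤ → Vec d) : Fin (q + 1) → ℤ → Vec d :=
  fun ζ l => c0 • DkH q k μ β ((p : ℝ) / q) Φ ζ l - ΔMop q hq τ α t n Φ ζ l
    - (DUG G (U0 (((l * (q : ℤ) + ((ζ : ℕ) : ℤ) : ℤ) : ℝ) / p)) r).mulVec (Φ ζ l)

/-- The adjoint fully discrete operator `𝒦*_{k,M}`. -/
def KkMstar {d : ℕ} (q : ℕ) (hq : 0 < q) (τ c0 : ℝ) (α : ℕ → Vec d) (G : Vec d → ℝ → Vec d)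
    (U0 : ℝ → Vec d) (r : ℝ) (k : ℕ) (μ : ℕ → ℝ) (β : ℝ) (p : ℕ) (t n : ℤ)
    (Φ : Fin (q + 1) → ℤ → Vec d) : Fin (q + 1) → ℤ → Vec d :=
  fun ζ l => c0 • DkHstar q k μ β ((p : ℝ) / q) Φ ζ l - ΔMop q hq τ α t n Φ ζ l
    - (DUG G (U0 (((l * (q : ℤ) + ((ζ : ℕ) : ℤ) : ℤ) : ℝ) / p)) r).transpose.mulVec (Φ ζ l)

/-- Sampling of a continuum function into `ℋ_M`: `[π_{ℋ_M}f](ζ,ξ) = f(ξ + ζM⁻¹)`. -/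
def piH {d : ℕ} (q p : ℕ) (f : ℝ → Vec d) : Fin (q + 1) → ℤ → Vec d :=
  fun ζ l => f (((l * (q : ℤ) + ((ζ : ℕ) : ℤ) : ℤ) : ℝ) / p)

/-- The twist datum `t = θ(M)·q ∈ {1,…,q}` associated with `M = p/q`. -/
def tOf (q p : ℕ) : ℤ := if p % q = 0 then (q : ℤ) else ((p % q : ℕ) : ℤ)

/-- The integer `n(M)` with `1 = (n + θ)M⁻¹`, i.e. `p = n q + t`. -/
def nOf (q p : ℕ) : ℤ := ((p : ℤ) - tOf q p) / (q : ℤ)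

/-! ### The limiting operators on `H¹(ℝ, ℓ²_{q,⊥;∞})` -/

/-- Periodic extension in `ζ` of a function `Θ(ζ,ξ)` using the convention
`Θ(ζ+1,ξ) = Θ(ζ,ξ)`. -/
def extPer {d : ℕ} (q : ℕ) (hq : 0 < q) (Θ : Fin (q + 1) → ℝ → Vec d) : ℤ → ℝ → Vec d :=
  fun j ξ => Θ (zmodIdx q hq j) ξ

/-- Complex version of `extPer`. -/
def extPerC {d : ℕ} (q : ℕ) (hq : 0 < q) (Θ : Fin (q + 1) → ℝ → VecC d) : ℤ → ℝ → VecC d :=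
  fun j ξ => Θ (zmodIdx q hq j) ξ

/-- The operator `Δ_{q,θ}` with twist datum `t = θ q`. -/
def ΔQθ {d : ℕ} (q : ℕ) (hq : 0 < q) (τ : ℝ) (α : ℕ → Vec d) (t : ℤ)
    (Θ : Fin (q + 1) → ℝ → Vec d) : Fin (q + 1) → ℝ → Vec d :=
  fun ζ ξ i => τ * ∑' m : ℕ, α (m + 1) i *
    (extPer q hq Θ (((ζ : ℕ) : ℤ) + ((m : ℤ) + 1) * t) (ξ + ((m : ℝ) + 1)) i
      + extPer q hq Θ (((ζ : ℕ) : ℤ) - ((m : ℤ) + 1) * t) (ξ - ((m : ℝ) + 1)) i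
      - 2 * Θ ζ ξ i)

/-- Complex version of `Δ_{q,θ}`. -/
def ΔQθC {d : ℕ} (q : ℕ) (hq : 0 < q) (τ : ℝ) (α : ℕ → Vec d) (t : ℤ)
    (Θ : Fin (q + 1) → ℝ → VecC d) : Fin (q + 1) → ℝ → VecC d :=
  fun ζ ξ i => (τ : ℂ) * ∑' m : ℕ, ((α (m + 1) i : ℝ) : ℂ) *
    (extPerC q hq Θ (((ζ : ℕ) : ℤ) + ((m : ℤ) + 1) * t) (ξ + ((m : ℝ) + 1)) i
      + extPerC q hq Θ (((ζ : ℕ) : ℤ) - ((m : ℤ) + 1) * t) (ξ - ((m : ℝ) + 1)) i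
      - 2 * Θ ζ ξ i)

/-- The limiting operator `𝒦̄_{q,θ} Θ = c̄₀ ∂_ξ Θ − Δ_{q,θ} Θ − D_U G(Ū₀(ξ); r̄) Θ`,
evaluated on a pair `(Θ, Θ')`. -/
def Kbar {d : ℕ} (q : ℕ) (hq : 0 < q) (τ c0 : ℝ) (α : ℕ → Vec d) (G : Vec d → ℝ → Vec d)
    (U0 : ℝ → Vec d) (r : ℝ) (t : ℤ) (Θ Θ' : Fin (q + 1) → ℝ → Vec d) :
    Fin (q + 1) → ℝ → Vec d :=
  fun ζ ξ => c0 • Θ' ζ ξ - ΔQθ q hq τ α t Θ ζ ξ - (DUG G (U0 ξ) r).mulVec (Θ ζ ξ)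

/-- The formal adjoint `𝒦̄*_{q,θ}`. -/
def KbarStar {d : ℕ} (q : ℕ) (hq : 0 < q) (τ c0 : ℝ) (α : ℕ → Vec d)
    (G : Vec d → ℝ → Vec d) (U0 : ℝ → Vec d) (r : ℝ) (t : ℤ)
    (Θ Θ' : Fin (q + 1) → ℝ → Vec d) : Fin (q + 1) → ℝ → Vec d :=
  fun ζ ξ => (-c0) • Θ' ζ ξ - ΔQθ q hq τ α t Θ ζ ξ
    - (DUG G (U0 ξ) r).transpose.mulVec (Θ ζ ξ)

/-- Complexification of `𝒦̄_{q,θ} + λ`. -/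
def KbarC {d : ℕ} (q : ℕ) (hq : 0 < q) (τ c0 : ℝ) (α : ℕ → Vec d) (G : Vec d → ℝ → Vec d)
    (U0 : ℝ → Vec d) (r : ℝ) (t : ℤ) (lam : ℂ) (Θ Θ' : Fin (q + 1) → ℝ → VecC d) :
    Fin (q + 1) → ℝ → VecC d :=
  fun ζ ξ i => (c0 : ℂ) * Θ' ζ ξ i - ΔQθC q hq τ α t Θ ζ ξ i
    - ∑ j, ((DUG G (U0 ξ) r i j : ℝ) : ℂ) * Θ ζ ξ j + lam * Θ ζ ξ i

/-- Membership of a pair `(Θ, Θ')` in `H¹(ℝ, ℓ²_{q,⊥;∞})`. -/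
def IsH1perp {d : ℕ} (q : ℕ) (Θ Θ' : Fin (q + 1) → ℝ → Vec d) : Prop :=
  (∀ ζ, IsH1 (Θ ζ) (Θ' ζ)) ∧ (∀ ξ : ℝ, Θ (Fin.last q) ξ = Θ 0 ξ) ∧
    (∀ ξ : ℝ, Θ' (Fin.last q) ξ = Θ' 0 ξ)

/-- Complex version of `IsH1perp`. -/
def IsH1perpC {d : ℕ} (q : ℕ) (Θ Θ' : Fin (q + 1) → ℝ → VecC d) : Prop :=
  (∀ ζ, IsH1C (Θ ζ) (Θ' ζ)) ∧ (∀ ξ : ℝ, Θ (Fin.last q) ξ = Θ 0 ξ) ∧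
    (∀ ξ : ℝ, Θ' (Fin.last q) ξ = Θ' 0 ξ)

/-- Membership of `Θ` in `L²(ℝ, ℓ²_{q,⊥;∞})`. -/
def MemL2perp {d : ℕ} (q : ℕ) (Θ : Fin (q + 1) → ℝ → Vec d) : Prop :=
  (∀ ζ, MemLp (Θ ζ) 2 (volume : Measure ℝ)) ∧ (∀ ξ : ℝ, Θ (Fin.last q) ξ = Θ 0 ξ)

/-- The `L²(ℝ, ℓ²_{q,⊥})` pairing. -/
def innerL2perp {d : ℕ} (q : ℕ) (Θ Ψ : Fin (q + 1) → ℝ → Vec d) : ℝ :=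
  ∫ ξ : ℝ, innerPerp q (fun ζ => Θ ζ ξ) (fun ζ => Ψ ζ ξ)

/-- The `H¹(ℝ, ℓ²_{q,⊥})` norm of a pair `(Θ, Θ')`. -/
def normH1perp {d : ℕ} (q : ℕ) (Θ Θ' : Fin (q + 1) → ℝ → Vec d) : ℝ :=
  Real.sqrt (innerL2perp q Θ Θ + innerL2perp q Θ' Θ')

/-- The `L²(ℝ, ℓ²_{q,⊥})` norm. -/
def normL2perp {d : ℕ} (q : ℕ) (Θ : Fin (q + 1) → ℝ → Vec d) : ℝ :=
  Real.sqrt (innerL2perp q Θ Θ)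

/-- The embedding `[π_⊥ f](ζ, ξ) = f(ξ)`. -/
def piPerp {d : ℕ} (q : ℕ) (f : ℝ → Vec d) : Fin (q + 1) → ℝ → Vec d := fun _ ξ => f ξ

/-! ### Characteristic matrices and operators -/

/-- `A(y)`: diagonal entries `A_i(y) = Σ_{m>0} α_m^{(i,i)}(1 − cos(my))`. -/
def Afun {d : ℕ} (α : ℕ → Vec d) (y : ℝ) : Fin d → ℝ :=
  fun i => ∑' m : ℕ, α (m + 1) i * (1 - Real.cos (((m : ℝ) + 1) * y))

/-- The averaged Jacobian `DG_ρ = ρ D_U G(P⁻; r̄) + (1−ρ) D_U G(P⁺; r̄)`. -/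
def DGrho {d : ℕ} (G : Vec d → ℝ → Vec d) (Pm Pp : Vec d) (r ρ : ℝ) :
    Matrix (Fin d) (Fin d) ℝ :=
  ρ • DUG G Pm r + (1 - ρ) • DUG G Pp r

/-- The characteristic matrix `Δ_{ρ;λ}(iy) = c̄₀ i y I + 2τ A(y) − DG_ρ + λ I`. -/
def charMat {d : ℕ} (τ c0 : ℝ) (α : ℕ → Vec d) (G : Vec d → ℝ → Vec d) (Pm Pp : Vec d)
    (r ρ y : ℝ) (lam : ℂ) : Matrix (Fin d) (Fin d) ℂ :=
  fun i j => (if i = j then (c0 : ℂ) * (y : ℂ) * Complex.I + lam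
      + 2 * (τ : ℂ) * ((Afun α y i : ℝ) : ℂ) else 0)
    - ((DGrho G Pm Pp r ρ i j : ℝ) : ℂ)

/-- Periodic extension of an element of (the complexification of) `ℓ²_{q,⊥;∞}`. -/
def extFinC {d : ℕ} (q : ℕ) (hq : 0 < q) (V : Fin (q + 1) → VecC d) : ℤ → VecC d :=
  fun j => V (zmodIdx q hq j)

/-- The characteristic operator `Δ_{q,θ,ρ;λ}(iy)` on the complexification of `ℓ²_{q,⊥;∞}`,
with twist datum `t = θq`. -/
def charOp {d : ℕ} (q : ℕ) (hq : 0 < q) (τ c0 : ℝ) (α : ℕ → Vec d)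
    (G : Vec d → ℝ → Vec d) (Pm Pp : Vec d) (r ρ : ℝ) (t : ℤ) (y : ℝ) (lam : ℂ)
    (V : Fin (q + 1) → VecC d) : Fin (q + 1) → VecC d :=
  fun ζ i => ((c0 : ℂ) * (y : ℂ) * Complex.I + lam) * V ζ i
    - (τ : ℂ) * ∑' m : ℕ, ((α (m + 1) i : ℝ) : ℂ) *
        (Complex.exp (Complex.I * ((m : ℝ) + 1) * y) *
            extFinC q hq V (((ζ : ℕ) : ℤ) + ((m : ℤ) + 1) * t) i
          + Complex.exp (-(Complex.I * ((m : ℝ) + 1) * y)) *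
            extFinC q hq V (((ζ : ℕ) : ℤ) - ((m : ℤ) + 1) * t) i
          - 2 * V ζ i)
    - ∑ j, ((DGrho G Pm Pp r ρ i j : ℝ) : ℂ) * V ζ j

/-! ### Interpolation operators -/

/-- The order-zero interpolation `ℐ⁰_M`. -/
def I0interp {d : ℕ} (q : ℕ) (M : ℝ) (Φ : Fin (q + 1) → ℤ → Vec d) :
    Fin (q + 1) → ℝ → Vec d :=
  fun ζ ξ => Φ ζ ⌊M * ξ⌋

/-- The order-one (piecewise linear) interpolation `ℐ¹_{k,M}`. -/
def I1interp {d : ℕ} (q : ℕ) (M : ℝ) (Φ : Fin (q + 1) → ℤ → Vec d) :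
    Fin (q + 1) → ℝ → Vec d :=
  fun ζ ξ => M • ((ξ - (⌊M * ξ⌋ : ℝ) / M) • Φ ζ (⌊M * ξ⌋ + 1)
    + (((⌊M * ξ⌋ : ℝ) + 1) / M - ξ) • Φ ζ ⌊M * ξ⌋)

/-- The a.e. derivative of the piecewise linear interpolation. -/
def I1deriv {d : ℕ} (q : ℕ) (M : ℝ) (Φ : Fin (q + 1) → ℤ → Vec d) :
    Fin (q + 1) → ℝ → Vec d :=
  fun ζ ξ => M • (Φ ζ (⌊M * ξ⌋ + 1) - Φ ζ ⌊M * ξ⌋)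

/-! ### `Δ_M` acting on continuum functions (for the convergence lemma) -/

/-- Extension of a continuum function `Θ(ζ,ξ)` via the convention
`Θ(ζ±1,ξ) = Θ(ζ, ξ±M⁻¹)`, where `Minv = M⁻¹`. -/
def extContM {d : ℕ} (q : ℕ) (hq : 0 < q) (Minv : ℝ) (Θ : Fin (q + 1) → ℝ → Vec d) :
    ℤ → ℝ → Vec d :=
  fun j ξ => Θ (zmodIdx q hq j) (ξ + ((j / (q : ℤ) : ℤ) : ℝ) * Minv)

/-- The operator `Δ_M` acting on continuum functions of `(ζ, ξ)`, with twist data `(t, n)`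
and `Minv = M⁻¹`. -/
def ΔMcont {d : ℕ} (q : ℕ) (hq : 0 < q) (τ : ℝ) (α : ℕ → Vec d) (t n : ℤ) (Minv : ℝ)
    (Θ : Fin (q + 1) → ℝ → Vec d) : Fin (q + 1) → ℝ → Vec d :=
  fun ζ ξ i => τ * ∑' m : ℕ, α (m + 1) i *
    (extContM q hq Minv Θ (((ζ : ℕ) : ℤ) + ((m : ℤ) + 1) * t)
        (ξ + ((m : ℝ) + 1) * (n : ℝ) * Minv) i
      + extContM q hq Minv Θ (((ζ : ℕ) : ℤ) - ((m : ℤ) + 1) * t)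
        (ξ - ((m : ℝ) + 1) * (n : ℝ) * Minv) i
      - 2 * Θ ζ ξ i)

/-! ### The quantities `ℰ_{k,M}(δ)`, `κ(δ)` and the resolvent bound -/

/-- The quantity `ℰ_{k,M}(δ)` from the spectral convergence method. -/
def EkM {d : ℕ} (q : ℕ) (hq : 0 < q) (τ c0 : ℝ) (α : ℕ → Vec d) (G : Vec d → ℝ → Vec d)
    (U0 : ℝ → Vec d) (r : ℝ) (k : ℕ) (μ : ℕ → ℝ) (β : ℝ) (Φm : ℝ → Vec d)
    (p : ℕ) (δ : ℝ) : ℝ :=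
  sInf { x : ℝ | ∃ Φ : Fin (q + 1) → ℤ → Vec d, HConstraint q Φ ∧ MemH q Φ ∧
    normH1 q k μ β ((p : ℝ) / q) Φ = 1 ∧
    x = normH q ((p : ℝ) / q)
          (fun ζ l => KkM q hq τ c0 α G U0 r k μ β p (tOf q p) (nOf q p) Φ ζ l + δ • Φ ζ l)
      + δ⁻¹ * |innerH q ((p : ℝ) / q) (piH q p Φm)
          (fun ζ l => KkM q hq τ c0 α G U0 r k μ β p (tOf q p) (nOf q p) Φ ζ l + δ • Φ ζ l)| }

/-- The quantity `ℰ*_{k,M}(δ)`, defined analogously with `𝒦*_{k,M}` and `Φ₀⁺`. -/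
def EkMstar {d : ℕ} (q : ℕ) (hq : 0 < q) (τ c0 : ℝ) (α : ℕ → Vec d) (G : Vec d → ℝ → Vec d)
    (U0 : ℝ → Vec d) (r : ℝ) (k : ℕ) (μ : ℕ → ℝ) (β : ℝ) (Φp : ℝ → Vec d)
    (p : ℕ) (δ : ℝ) : ℝ :=
  sInf { x : ℝ | ∃ Φ : Fin (q + 1) → ℤ → Vec d, HConstraint q Φ ∧ MemH q Φ ∧
    normH1 q k μ β ((p : ℝ) / q) Φ = 1 ∧
    x = normH q ((p : ℝ) / q)
          (fun ζ l => KkMstar q hq τ c0 α G U0 r k μ β p (tOf q p) (nOf q p) Φ ζ l + δ • Φ ζ l)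
      + δ⁻¹ * |innerH q ((p : ℝ) / q) (piH q p Φp)
          (fun ζ l => KkMstar q hq τ c0 α G U0 r k μ β p (tOf q p) (nOf q p) Φ ζ l + δ • Φ ζ l)| }

/-- `κ(δ) = liminf_{M → ∞, M ∈ ℳ_q} ℰ_{k,M}(δ)`. -/
def kappaE {d : ℕ} (q : ℕ) (hq : 0 < q) (τ c0 : ℝ) (α : ℕ → Vec d) (G : Vec d → ℝ → Vec d)
    (U0 : ℝ → Vec d) (r : ℝ) (k : ℕ) (μ : ℕ → ℝ) (β : ℝ) (Φm : ℝ → Vec d) (δ : ℝ) : ℝ :=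
  Filter.liminf (fun p : ℕ => EkM q hq τ c0 α G U0 r k μ β Φm p δ)
    (Filter.atTop ⊓ Filter.principal {p : ℕ | Nat.Coprime p q ∧ q ≤ p})

/-- `κ*(δ) = liminf_{M → ∞, M ∈ ℳ_q} ℰ*_{k,M}(δ)`. -/
def kappaEstar {d : ℕ} (q : ℕ) (hq : 0 < q) (τ c0 : ℝ) (α : ℕ → Vec d)
    (G : Vec d → ℝ → Vec d) (U0 : ℝ → Vec d) (r : ℝ) (k : ℕ) (μ : ℕ → ℝ) (β : ℝ)
    (Φp : ℝ → Vec d) (δ : ℝ) : ℝ :=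
  Filter.liminf (fun p : ℕ => EkMstar q hq τ c0 α G U0 r k μ β Φp p δ)
    (Filter.atTop ⊓ Filter.principal {p : ℕ | Nat.Coprime p q ∧ q ≤ p})

/-- The resolvent bound for the limiting operator `𝒦̄_{q,θ}` (with twist datum `t = θq`):
for `0 < δ < δ0`, `𝒦̄_{q,θ} + δ` is surjective onto `L²(ℝ,ℓ²_{q,⊥;∞})` and every solution
obeys the `H¹` estimate with constant `C`. -/
def ResolventBound {d : ℕ} (q : ℕ) (hq : 0 < q) (τ c0 : ℝ) (α : ℕ → Vec d)
    (G : Vec d → ℝ → Vec d) (U0 : ℝ → Vec d) (r : ℝ) (t : ℤ) (Φm : ℝ → Vec d)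
    (C δ0 : ℝ) : Prop :=
  ∀ δ : ℝ, 0 < δ → δ < δ0 →
    (∀ Θ : Fin (q + 1) → ℝ → Vec d, MemL2perp q Θ →
      ∃ Φ Φ' : Fin (q + 1) → ℝ → Vec d, IsH1perp q Φ Φ' ∧
        ∀ᵐ ξ ∂(volume : Measure ℝ), ∀ ζ,
          Kbar q hq τ c0 α G U0 r t Φ Φ' ζ ξ + δ • Φ ζ ξ = Θ ζ ξ) ∧
    (∀ Θ Φ Φ' : Fin (q + 1) → ℝ → Vec d, MemL2perp q Θ → IsH1perp q Φ Φ' →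
      (∀ᵐ ξ ∂(volume : Measure ℝ), ∀ ζ,
          Kbar q hq τ c0 α G U0 r t Φ Φ' ζ ξ + δ • Φ ζ ξ = Θ ζ ξ) →
      normH1perp q Φ Φ' ≤ C * (normL2perp q Θ + δ⁻¹ * |innerL2perp q Θ (piPerp q Φm)|))

/-- The second derivative `D²G(U;r)[a,b]` of the nonlinearity. -/
def D2G {d : ℕ} (G : Vec d → ℝ → Vec d) (U : Vec d) (r : ℝ) (a b : Vec d) : Vec d :=
  fun i => fderiv ℝ (fun V => fderiv ℝ (fun W => G W r i) V a) U b

/-- The quasi-inverse `L₀^{qinv} G = L₀⁻¹[G − (⟨Φ₀⁻,G⟩/⟨Φ₀⁻,Φ₀⁺⟩) Φ₀⁺]`, built from a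
given inverse `Linv` of the restriction `L₀ : X₀ → Y₀`. -/
def qinvOf {d : ℕ} (Linv : (ℝ → Vec d) → (ℝ → Vec d)) (Φp Φm : ℝ → Vec d)
    (Gf : ℝ → Vec d) : ℝ → Vec d :=
  Linv (fun ξ => Gf ξ - (innerL2 Φm Gf / innerL2 Φm Φp) • Φp ξ)

/-!
Unfolding `Φ(ζ, l) ↦ V(lq + ζ)` identifies the constrained elements of `ℋ_M` isometrically with
the grid space `𝒴_M = ℓ²_p(ℤ; ℝ^d)` (the weights `1/2` of `ℓ²_{q,⊥}` at `ζ = 0, 1` telescope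
when summed over `l`), and it turns `D_{k,M}`, `Δ_M` and `𝒦_{k,M}` into the grid operators
`D_{k,M}`, `Δ₀` and `L_{k,M}` on `p⁻¹ℤ`. On the grid,
`c̄₀ D_{k,M} V = Ψ + Δ₀ V + D_U G(Ū₀) V − δ V`: translations are isometries of `ℓ²`, so
`‖Δ₀‖ ≤ 4τ Σ_m |α_m|`, and `‖D_U G(Ū₀(ξ); r̄)‖ ≤ K` because `Ū₀` stays in a compact set and
`G(·; r̄)` is `C¹`. The triangle inequality and `(a + b)² ≤ 2a² + 2b²` then give the claim with
`C₁ = (4τ Σ_m |α_m| + K + 1)²`.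
-/

section BlockSums

variable (q : ℕ) [NeZero q]

theorem HasSum.blockSum {R : Type*} [AddCommMonoid R] [TopologicalSpace R] [ContinuousAdd R]
    [RegularSpace R] {a : ℤ → R} {s : R} (h : HasSum a s) :
    HasSum (fun l : ℤ => ∑ n ∈ Finset.range q, a (l * q + n)) s := by
  have hprod : HasSum (fun w : ℤ × Fin q => a (w.1 * q + w.2)) s :=
    (Int.divModEquiv q).symm.hasSum_iff.2 h
  refine hprod.prod_fiberwise fun l => ?_
  rw [← Fin.sum_univ_eq_sum_range (fun n => a (l * q + n))]
  exact hasSum_fintype _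

theorem summable_of_summable_blockSum {a : ℤ → ℝ} (ha : 0 ≤ a)
    (h : Summable fun l : ℤ => ∑ n ∈ Finset.range q, a (l * q + n)) : Summable a := by
  rw [← (Int.divModEquiv q).symm.summable_iff]
  refine (summable_prod_of_nonneg fun _ => ha _).2
    ⟨fun _ => Summable.of_finite, h.congr fun l => ?_⟩
  rw [tsum_fintype, ← Fin.sum_univ_eq_sum_range (fun n => a (l * q + n))]
  rfl

end BlockSums

theorem tOf_add_nOf_mul (q p : ℕ) : tOf q p + nOf q p * q = p := by
  have hdvd : (q : ℤ) ∣ p - tOf q p := by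
    unfold tOf
    split_ifs with h
    · exact dvd_sub (Int.natCast_dvd_natCast.2 (Nat.dvd_of_mod_eq_zero h)) dvd_rfl
    · exact Int.dvd_self_sub_of_emod_eq (by push_cast; rfl)
  rw [nOf, Int.ediv_mul_cancel hdvd]
  ring

section Folding

variable {q : ℕ}

/-- The point `(ζ, ξ) = (ζ'/q, l/M)` of `ℋ_M`'s index set sits at `ξ + ζM⁻¹ = (lq + ζ')/p` on
the grid `p⁻¹ℤ`; `foldH q V` reads an element of `ℋ_M` off a grid sequence `V` accordingly. -/
def foldH (q : ℕ) (V : ℤ → Vec d) : Fin (q + 1) → ℤ → Vec d :=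
  fun ζ l => V (l * q + (ζ : ℕ))

theorem val_zmodIdx (hq : 0 < q) (j : ℤ) : ((zmodIdx q hq j : ℕ) : ℤ) = j % q :=
  Int.toNat_of_nonneg (Int.emod_nonneg j (by exact_mod_cast hq.ne'))

theorem extH_foldH (hq : 0 < q) (V : ℤ → Vec d) (a b : ℤ) :
    extH q hq (foldH q V) a b = V (a + b * q) := by
  simp only [extH, foldH, val_zmodIdx]
  congr 1
  linear_combination Int.ediv_mul_add_emod a q

theorem exists_foldH_eq (hq : 0 < q) {Φ : Fin (q + 1) → ℤ → Vec d} (hΦ : HConstraint q Φ) :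
    ∃ V, foldH q V = Φ := by
  refine ⟨fun j => Φ (zmodIdx q hq j) (j / q), funext fun ζ => funext fun l => ?_⟩
  have hq' : (q : ℤ) ≠ 0 := by exact_mod_cast hq.ne'
  rcases (Nat.lt_succ_iff.mp ζ.isLt).lt_or_eq with hζ | hζ
  · have hζ' : ((ζ : ℕ) : ℤ) < q := by exact_mod_cast hζ
    have hmod : (l * q + (ζ : ℕ)) % (q : ℤ) = (ζ : ℕ) := by
      rw [add_comm, Int.add_mul_emod_self_right, Int.emod_eq_of_lt (by positivity) hζ']
    have hdiv : (l * q + (ζ : ℕ)) / (q : ℤ) = l := by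
      rw [add_comm, Int.add_mul_ediv_right _ _ hq', Int.ediv_eq_zero_of_lt (by positivity) hζ',
        zero_add]
    have hidx : zmodIdx q hq (l * q + (ζ : ℕ)) = ζ := by
      ext; exact_mod_cast (val_zmodIdx hq _).trans hmod
    simp only [foldH, hidx, hdiv]
  · have hlast : ζ = Fin.last q := Fin.ext hζ
    have hpt : l * q + (ζ : ℕ) = (l + 1) * q := by rw [hζ]; ring
    have hidx : zmodIdx q hq ((l + 1) * q) = 0 := by
      have h := val_zmodIdx hq ((l + 1) * q)
      rw [Int.mul_emod_left] at h
      ext; rw [Fin.val_zero]; omega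
    simp only [foldH]
    rw [hpt, hidx, Int.mul_ediv_cancel _ hq', hlast]
    exact (hΦ l).symm

theorem DkH_foldH (k : ℕ) (μ : ℕ → ℝ) (β M : ℝ) (V : ℤ → Vec d) :
    DkH q k μ β M (foldH q V) = foldH q (DkY k μ β M q V) := by
  funext ζ l
  simp only [DkH, DkY, foldH]
  congr 3 with n
  ring_nf

theorem ΔMop_foldH (hq : 0 < q) (τ : ℝ) (α : ℕ → Vec d) {p : ℕ} {t n : ℤ}
    (htn : t + n * q = p) (V : ℤ → Vec d) :
    ΔMop q hq τ α t n (foldH q V) = foldH q (Δ0Y τ α p V) := by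
  funext ζ l i
  simp only [ΔMop, extH_foldH]
  congr 2 with m
  simp only [foldH, ← htn]
  ring_nf

theorem KkM_foldH (hq : 0 < q) (τ c0 : ℝ) (α : ℕ → Vec d) (G : Vec d → ℝ → Vec d)
    (U0 : ℝ → Vec d) (r : ℝ) (k : ℕ) (μ : ℕ → ℝ) (β : ℝ) {p : ℕ} {t n : ℤ}
    (htn : t + n * q = p) (V : ℤ → Vec d) :
    KkM q hq τ c0 α G U0 r k μ β p t n (foldH q V)
      = foldH q (LkMop τ c0 α G U0 r k μ β p q V) := by
  funext ζ l
  simp only [KkM, DkH_foldH, ΔMop_foldH hq τ α htn]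
  rfl

theorem dotV_self_eq_norm_sq (v : Vec d) : dotV v v = ‖WithLp.toLp 2 v‖ ^ 2 := by
  rw [EuclideanSpace.norm_sq_eq]
  simp [dotV, sq]

theorem dotV_self_nonneg (v : Vec d) : 0 ≤ dotV v v := by
  rw [dotV_self_eq_norm_sq]
  positivity

theorem innerPerp_foldH (hq : 0 < q) (V : ℤ → Vec d) (l : ℤ) :
    innerPerp q (fun ζ => foldH q V ζ l) (fun ζ => foldH q V ζ l)
      = (q : ℝ)⁻¹ * (∑ n ∈ Finset.range q, dotV (V (l * q + n)) (V (l * q + n))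
        + (dotV (V ((l + 1) * q)) (V ((l + 1) * q)) - dotV (V (l * q)) (V (l * q))) / 2) := by
  have hIoo : ∑ ζ ∈ Finset.Ioo (0 : Fin (q + 1)) (Fin.last q),
      dotV (foldH q V ζ l) (foldH q V ζ l)
        = ∑ n ∈ Finset.Ioo 0 q, dotV (V (l * q + n)) (V (l * q + n)) := by
    have hmap : (Finset.Ioo (0 : Fin (q + 1)) (Fin.last q)).map Fin.valEmbedding
        = Finset.Ioo 0 q := by
      rw [Fin.map_valEmbedding_Ioo]; simp
    rw [← hmap, Finset.sum_map]
    rfl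
  have hrange : ∑ n ∈ Finset.range q, dotV (V (l * q + n)) (V (l * q + n))
      = dotV (V (l * q)) (V (l * q))
        + ∑ n ∈ Finset.Ioo 0 q, dotV (V (l * q + n)) (V (l * q + n)) := by
    rw [Finset.range_eq_Ico, Finset.sum_eq_sum_Ico_succ_bot hq, Finset.Ico_add_one_left_eq_Ioo]
    simp
  have hlast : l * q + ((Fin.last q : ℕ) : ℤ) = (l + 1) * q := by simp; ring
  simp only [innerPerp]
  rw [hIoo, hrange]
  simp only [foldH, hlast, Fin.val_zero, Nat.cast_zero, add_zero]
  ring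

theorem memY_of_memH_foldH (hq : 0 < q) {V : ℤ → Vec d} (hV : MemH q (foldH q V)) : MemY V := by
  have : NeZero q := ⟨hq.ne'⟩
  refine summable_of_summable_blockSum q (fun j => dotV_self_nonneg (V j))
    (.of_nonneg_of_le (fun l => Finset.sum_nonneg fun n _ => dotV_self_nonneg _)
      (fun l => ?_) ((show Summable _ from hV).mul_left (2 * (q : ℝ))))
  have hfirst : dotV (V (l * q)) (V (l * q))
      ≤ ∑ n ∈ Finset.range q, dotV (V (l * q + n)) (V (l * q + n)) := by
    simpa using Finset.single_le_sum (f := fun n : ℕ => dotV (V (l * q + n)) (V (l * q + n)))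
      (fun n _ => dotV_self_nonneg _) (Finset.mem_range.2 hq)
  have hq0 : (q : ℝ) ≠ 0 := by exact_mod_cast hq.ne'
  rw [innerPerp_foldH hq, ← mul_assoc, mul_assoc 2, mul_inv_cancel₀ hq0, mul_one]
  linarith [dotV_self_nonneg (V ((l + 1) * q))]

theorem normH_foldH (hq : 0 < q) (p : ℕ) (V : ℤ → Vec d) :
    normH q ((p : ℝ) / q) (foldH q V) = normY p V := by
  have : NeZero q := ⟨hq.ne'⟩
  have hq0 : (q : ℝ) ≠ 0 := by exact_mod_cast hq.ne'
  unfold normH normY innerH innerY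
  congr 1
  by_cases hV : MemY V
  · have hb : HasSum (fun l : ℤ => dotV (V (l * q)) (V (l * q)))
        (∑' l : ℤ, dotV (V (l * q)) (V (l * q))) :=
      (hV.comp_injective fun x y h => mul_right_cancel₀ (by exact_mod_cast hq.ne') h).hasSum
    have hb1 := (Equiv.addRight (1 : ℤ)).hasSum_iff.2 hb
    simp only [Function.comp_def, Equiv.coe_addRight] at hb1
    have hsum := (((hV.hasSum.blockSum q).add ((hb1.sub hb).div_const 2)).mul_left (q : ℝ)⁻¹)
    rw [(hsum.congr_fun fun l => innerPerp_foldH hq V l).tsum_eq]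
    rw [sub_self, zero_div, add_zero, inv_div, ← mul_assoc, div_mul_eq_mul_div,
      mul_inv_cancel₀ hq0, one_div]
  · have hH : ¬ MemH q (foldH q V) := fun h => hV (memY_of_memH_foldH hq h)
    unfold MemH at hH
    unfold MemY at hV
    rw [tsum_eq_zero_of_not_summable hH, tsum_eq_zero_of_not_summable hV]
    simp

end Folding

section LpOperators

open scoped ENNReal

variable {ι E F : Type*} [NormedAddCommGroup E] [NormedAddCommGroup F]

theorem Memℓp.comp_addRight {f : ℤ → E} (hf : Memℓp f 2) (c : ℤ) :
    Memℓp (fun j => f (j + c)) 2 := by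
  rw [memℓp_gen_iff (by norm_num)] at hf ⊢
  exact (Equiv.addRight c).summable_iff.2 hf

def lpTranslate (c : ℤ) (W : lp (fun _ : ℤ => E) 2) : lp (fun _ : ℤ => E) 2 :=
  ⟨fun j => W (j + c), (lp.memℓp W).comp_addRight c⟩

@[simp]
theorem lpTranslate_apply (c : ℤ) (W : lp (fun _ : ℤ => E) 2) (j : ℤ) :
    lpTranslate c W j = W (j + c) := rfl

@[simp]
theorem norm_lpTranslate (c : ℤ) (W : lp (fun _ : ℤ => E) 2) : ‖lpTranslate c W‖ = ‖W‖ := by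
  rw [lp.norm_eq_tsum_rpow (by norm_num), lp.norm_eq_tsum_rpow (by norm_num)]
  congr 1
  exact (Equiv.addRight c).tsum_eq fun j => ‖W j‖ ^ (2 : ℝ≥0∞).toReal

variable [NormedSpace ℝ E] [NormedSpace ℝ F] {p : ℝ≥0∞}

def lpMapCLM (T : ι → E →L[ℝ] F) {K : ℝ} (hT : ∀ i, ‖T i‖ ≤ K) (W : lp (fun _ : ι => E) p) :
    lp (fun _ : ι => F) p :=
  ⟨fun i => T i (W i), ((lp.memℓp W).norm.const_mul K).mono fun i =>
    (T i).le_of_opNorm_le (hT i) (W i)⟩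

@[simp]
theorem lpMapCLM_apply (T : ι → E →L[ℝ] F) {K : ℝ} (hT : ∀ i, ‖T i‖ ≤ K)
    (W : lp (fun _ : ι => E) p) (i : ι) : lpMapCLM T hT W i = T i (W i) := rfl

theorem norm_lpMapCLM_le [Fact (1 ≤ p)] (T : ι → E →L[ℝ] F) {K : ℝ} (hT : ∀ i, ‖T i‖ ≤ K)
    (hK : 0 ≤ K) (W : lp (fun _ : ι => E) p) : ‖lpMapCLM T hT W‖ ≤ K * ‖W‖ := by
  have hp : p ≠ 0 := (zero_lt_one.trans_le Fact.out).ne'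
  calc ‖lpMapCLM T hT W‖ ≤ ‖K • W‖ := lp.norm_mono hp fun i => by
        rw [lp.coeFn_smul, Pi.smul_apply, norm_smul, Real.norm_of_nonneg hK]
        exact (T i).le_of_opNorm_le (hT i) (W i)
    _ = K * ‖W‖ := by rw [lp.norm_const_smul hp, Real.norm_of_nonneg hK]

end LpOperators

open scoped Matrix.Norms.L2Operator

section GridL2

/-- `ℓ²(ℤ, ℝ^d)` with the Euclidean norm on `ℝ^d`: the space `𝒴_M` without its weight `p⁻¹`. -/
abbrev GridL2 (d : ℕ) := lp (fun _ : ℤ => EuclideanSpace ℝ (Fin d)) 2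

theorem exists_gridL2_of_memY {V : ℤ → Vec d} (hV : MemY V) :
    ∃ W : GridL2 d, ∀ j, W j = WithLp.toLp 2 (V j) := by
  have hmem : Memℓp (fun j => WithLp.toLp 2 (V j)) 2 := by
    rw [memℓp_gen_iff (by norm_num)]
    simp only [ENNReal.toReal_ofNat, Real.rpow_two, ← dotV_self_eq_norm_sq]
    exact hV
  exact ⟨⟨_, hmem⟩, fun j => rfl⟩

theorem normY_sq_eq {W : GridL2 d} {V : ℤ → Vec d} (hW : ∀ j, W j = WithLp.toLp 2 (V j))
    (p : ℕ) : normY p V ^ 2 = (p : ℝ)⁻¹ * ‖W‖ ^ 2 := by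
  have hnorm := lp.norm_rpow_eq_tsum (p := 2) (by norm_num) W
  simp only [ENNReal.toReal_ofNat, Real.rpow_two, hW, ← dotV_self_eq_norm_sq] at hnorm
  rw [normY, innerY, Real.sq_sqrt (mul_nonneg (by positivity)
    (tsum_nonneg fun j => dotV_self_nonneg _)), hnorm]

theorem exists_gridL2_DkY {W : GridL2 d} {V : ℤ → Vec d} (hW : ∀ j, W j = WithLp.toLp 2 (V j))
    (k : ℕ) (μ : ℕ → ℝ) (β M : ℝ) (q : ℕ) :
    ∃ D : GridL2 d, ∀ j, D j = WithLp.toLp 2 (DkY k μ β M q V j) := by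
  refine ⟨β⁻¹ • M • ∑ n ∈ Finset.range (k + 1), μ n • lpTranslate (-((k - n) * q)) W,
    fun j => ?_⟩
  simp only [lp.coeFn_smul, lp.coeFn_sum, Pi.smul_apply, Finset.sum_apply, lpTranslate_apply,
    hW, DkY, WithLp.toLp_smul, WithLp.toLp_sum, sub_eq_add_neg]

theorem exists_gridL2_mulVec_le {W : GridL2 d} {V : ℤ → Vec d}
    (hW : ∀ j, W j = WithLp.toLp 2 (V j)) (A : ℤ → Matrix (Fin d) (Fin d) ℝ) {K : ℝ}
    (hA : ∀ j, ‖A j‖ ≤ K) (hK : 0 ≤ K) :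
    ∃ X : GridL2 d, (∀ j, X j = WithLp.toLp 2 ((A j).mulVec (V j))) ∧ ‖X‖ ≤ K * ‖W‖ :=
  ⟨lpMapCLM (fun j => Matrix.toEuclideanCLM (𝕜 := ℝ) (n := Fin d) (A j))
      (fun j => (Matrix.l2_opNorm_toEuclideanCLM (A j)).trans_le (hA j)) W,
    fun j => by simp only [lpMapCLM_apply, hW, Matrix.toEuclideanCLM_toLp],
    norm_lpMapCLM_le _ _ hK W⟩

theorem exists_gridL2_Δ0Y_le {W : GridL2 d} {V : ℤ → Vec d}
    (hW : ∀ j, W j = WithLp.toLp 2 (V j)) (τ : ℝ) {α : ℕ → Vec d}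
    (hα : Summable fun m : ℕ => ‖α (m + 1)‖) (p : ℕ) :
    ∃ X : GridL2 d, (∀ j, X j = WithLp.toLp 2 (Δ0Y τ α p V j)) ∧
      ‖X‖ ≤ 4 * |τ| * (∑' m : ℕ, ‖α (m + 1)‖) * ‖W‖ := by
  let c : ℕ → ℤ := fun m => (m + 1) * p
  let g : ℕ → GridL2 d := fun m => τ • lpMapCLM
    (fun _ => Matrix.toEuclideanCLM (𝕜 := ℝ) (n := Fin d) (Matrix.diagonal (α (m + 1))))
    (fun _ => ((Matrix.l2_opNorm_toEuclideanCLM _).trans (Matrix.l2_opNorm_diagonal _)).le)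
    (lpTranslate (c m) W + lpTranslate (-c m) W - (2 : ℝ) • W)
  have hg : ∀ m, ‖g m‖ ≤ 4 * |τ| * ‖W‖ * ‖α (m + 1)‖ := fun m => by
    have hsecond : ‖lpTranslate (c m) W + lpTranslate (-c m) W - (2 : ℝ) • W‖ ≤ 4 * ‖W‖ := by
      refine (norm_sub_le _ _).trans ?_
      rw [norm_smul, Real.norm_two]
      linarith [norm_add_le (lpTranslate (c m) W) (lpTranslate (-c m) W),
        norm_lpTranslate (c m) W, norm_lpTranslate (-c m) W]
    calc ‖g m‖ ≤ |τ| * (‖α (m + 1)‖ * (4 * ‖W‖)) := by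
          rw [norm_smul, Real.norm_eq_abs]
          gcongr
          exact (norm_lpMapCLM_le _ _ (norm_nonneg _) _).trans (by gcongr)
      _ = 4 * |τ| * ‖W‖ * ‖α (m + 1)‖ := by ring
  have hbound : HasSum (fun m => 4 * |τ| * ‖W‖ * ‖α (m + 1)‖)
      (4 * |τ| * ‖W‖ * ∑' m : ℕ, ‖α (m + 1)‖) := hα.hasSum.mul_left _
  have hs : Summable g := .of_norm_bounded hbound.summable hg
  refine ⟨∑' m, g m, fun j => PiLp.ext fun i => ?_, ?_⟩
  · let evalAt : GridL2 d →L[ℝ] ℝ :=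
      (EuclideanSpace.proj i).comp (lp.evalCLM ℝ (fun _ => EuclideanSpace ℝ (Fin d)) 2 j)
    change evalAt (∑' m, g m) = _
    rw [evalAt.map_tsum hs]
    simp only [Δ0Y, ← tsum_mul_left]
    congr 1 with m
    simp only [evalAt, g, c, ContinuousLinearMap.comp_apply, lp.evalCLM,
      LinearMap.mkContinuous_apply, lp.evalₗ_apply, lp.coeFn_smul, lp.coeFn_sub, lp.coeFn_add,
      Pi.smul_apply, Pi.sub_apply, Pi.add_apply, lpMapCLM_apply, lpTranslate_apply, hW, map_sub,
      map_add, map_smul, Matrix.toEuclideanCLM_toLp, PiLp.proj_apply,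
      Matrix.mulVec_diagonal, smul_eq_mul, ← sub_eq_add_neg]
    ring
  · calc ‖∑' m, g m‖ ≤ 4 * |τ| * ‖W‖ * ∑' m : ℕ, ‖α (m + 1)‖ := tsum_of_norm_bounded hbound hg
      _ = _ := by ring

end GridL2

section Jacobian

variable {G : Vec d → ℝ → Vec d} {r : ℝ}

theorem HS2.contDiff_slice {Pm Pp : Vec d} (h : HS2 d G Pm Pp) (hr : r ∈ Set.Ioo (0 : ℝ) 1) :
    ContDiff ℝ 2 (G · r) := by
  have hmk : ContDiff ℝ 2 fun U : Vec d => (U, r) := contDiff_id.prodMk contDiff_const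
  exact contDiffOn_univ.1 (h.smooth.comp hmk.contDiffOn fun _ _ => ⟨trivial, hr⟩)

theorem continuous_DUG (hG : ContDiff ℝ 1 (G · r)) : Continuous fun U => DUG G U r := by
  refine continuous_pi fun i => continuous_pi fun j => ?_
  have hGi : ContDiff ℝ 1 fun U => G U r i := (contDiff_apply ℝ ℝ i).comp hG
  exact (hGi.continuous_fderiv one_ne_zero).clm_apply continuous_const

theorem exists_bound_DUG (hG : ContDiff ℝ 1 (G · r)) {X : Type*} {U0 : X → Vec d} {C : ℝ}
    (hU0 : ∀ ξ, ‖U0 ξ‖ ≤ C) : ∃ K, 0 ≤ K ∧ ∀ ξ, ‖DUG G (U0 ξ) r‖ ≤ K := by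
  obtain ⟨K, hK⟩ := (isCompact_closedBall (0 : Vec d) C).exists_bound_of_continuousOn
    (continuous_norm.comp (continuous_DUG hG)).continuousOn
  refine ⟨max K 0, le_max_right _ _, fun ξ => ?_⟩
  have := hK (U0 ξ) (mem_closedBall_zero_iff.2 (hU0 ξ))
  rw [Function.comp_apply, norm_norm] at this
  exact this.trans (le_max_left _ _)

end Jacobian

theorem HS1.summable_norm {d ddiff : ℕ} {τ ν : ℝ} {α : ℕ → Vec d} (h : HS1 d ddiff τ α ν) :
    Summable fun m : ℕ => ‖α (m + 1)‖ :=
  .of_nonneg_of_le (fun _ => norm_nonneg _)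
    (fun m => le_mul_of_one_le_right (norm_nonneg _)
      (Real.one_le_exp (mul_nonneg (by positivity) h.ν_pos.le))) h.exp_summable

theorem sq_mul_normY_DkY_sq_le {τ c0 : ℝ} {α : ℕ → Vec d} {G : Vec d → ℝ → Vec d}
    {U0 : ℝ → Vec d} {r K : ℝ} (hα : Summable fun m : ℕ => ‖α (m + 1)‖) (hK : 0 ≤ K)
    (hG : ∀ ξ, ‖DUG G (U0 ξ) r‖ ≤ K) (k : ℕ) (μ : ℕ → ℝ) (β : ℝ) (p q : ℕ) {δ : ℝ}
    (hδ : |δ| ≤ 1) {V : ℤ → Vec d} (hV : MemY V) :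
    c0 ^ 2 * normY p (DkY k μ β ((p : ℝ) / q) q V) ^ 2 ≤
      2 * normY p (fun j => LkMop τ c0 α G U0 r k μ β p q V j + δ • V j) ^ 2
        + 2 * (4 * |τ| * (∑' m : ℕ, ‖α (m + 1)‖) + K + 1) ^ 2 * normY p V ^ 2 := by
  obtain ⟨W, hW⟩ := exists_gridL2_of_memY hV
  obtain ⟨D, hD⟩ := exists_gridL2_DkY hW k μ β ((p : ℝ) / q) q
  obtain ⟨X, hX, hXle⟩ := exists_gridL2_Δ0Y_le hW τ hα p
  obtain ⟨B, hB, hBle⟩ := exists_gridL2_mulVec_le hW (fun j => DUG G (U0 (j / p)) r)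
    (fun j => hG _) hK
  set Ψ := c0 • D - X - B + δ • W
  have hΨ : ∀ j, Ψ j = WithLp.toLp 2 (LkMop τ c0 α G U0 r k μ β p q V j + δ • V j) := by
    intro j
    simp only [Ψ, lp.coeFn_add, lp.coeFn_sub, lp.coeFn_smul, Pi.add_apply, Pi.sub_apply,
      Pi.smul_apply, hD, hX, hB, hW, LkMop, WithLp.toLp_add, WithLp.toLp_sub, WithLp.toLp_smul]
  set C := 4 * |τ| * (∑' m : ℕ, ‖α (m + 1)‖) + K + 1
  have hDle : |c0| * ‖D‖ ≤ ‖Ψ‖ + C * ‖W‖ := by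
    have hδW : ‖δ • W‖ ≤ ‖W‖ := by
      rw [norm_smul, Real.norm_eq_abs]
      exact mul_le_of_le_one_left (norm_nonneg _) hδ
    calc |c0| * ‖D‖ = ‖Ψ + X + B - δ • W‖ := by
          rw [← Real.norm_eq_abs, ← norm_smul]
          congr 1
          simp only [Ψ]
          abel
      _ ≤ ‖Ψ‖ + ‖X‖ + ‖B‖ + ‖δ • W‖ := by
          linarith [norm_sub_le (Ψ + X + B) (δ • W), norm_add_le (Ψ + X) B, norm_add_le Ψ X]
      _ ≤ ‖Ψ‖ + C * ‖W‖ := by linarith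
  have hsq : c0 ^ 2 * ‖D‖ ^ 2 ≤ 2 * ‖Ψ‖ ^ 2 + 2 * C ^ 2 * ‖W‖ ^ 2 := by
    have h0 : 0 ≤ |c0| * ‖D‖ := by positivity
    nlinarith [sq_abs c0, mul_self_le_mul_self h0 hDle, sq_nonneg (‖Ψ‖ - C * ‖W‖)]
  rw [normY_sq_eq hD, normY_sq_eq hΨ, normY_sq_eq hW]
  have hp : (0 : ℝ) ≤ (p : ℝ)⁻¹ := by positivity
  nlinarith [mul_le_mul_of_nonneg_left hsq hp]

theorem statement_10_general
    {d ddiff : ℕ} {τ ν : ℝ} {α : ℕ → Vec d} {G : Vec d → ℝ → Vec d} {Pm Pp : Vec d}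
    {rbar c0 : ℝ} {U0 U0' : ℝ → Vec d}
    (hHS1 : HS1 d ddiff τ α ν) (hHS2 : HS2 d G Pm Pp)
    (hrbar : rbar ∈ Set.Ioo (0 : ℝ) 1)
    (hHW1 : HW1 τ α G Pm Pp rbar c0 U0 U0')
    (k : ℕ) (q : ℕ) (hq : 0 < q)
    (μ : ℕ → ℝ) (β : ℝ) :
    ∃ C1 : ℝ, 0 < C1 ∧
      ∀ p : ℕ, Nat.Coprime p q → q ≤ p →
      ∀ δ : ℝ, 0 < δ → δ < 1 →
      ∀ Φ : Fin (q + 1) → ℤ → Vec d, HConstraint q Φ → MemH q Φ →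
        c0 ^ 2 * (normH q ((p : ℝ) / q) (DkH q k μ β ((p : ℝ) / q) Φ)) ^ 2 ≤
          2 * (normH q ((p : ℝ) / q)
              (fun ζ l => KkM q hq τ c0 α G U0 rbar k μ β p (tOf q p) (nOf q p) Φ ζ l
                + δ • Φ ζ l)) ^ 2
            + 2 * C1 * (normH q ((p : ℝ) / q) Φ) ^ 2 := by
  obtain ⟨CU, hCU⟩ := hHW1.bounded
  obtain ⟨K, hK0, hK⟩ :=
    exists_bound_DUG ((hHS2.contDiff_slice hrbar).of_le one_le_two) hCU
  refine ⟨(4 * |τ| * (∑' m : ℕ, ‖α (m + 1)‖) + K + 1) ^ 2, by positivity, ?_⟩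
  intro p _ _ δ hδ0 hδ1 Φ hΦ hmem
  obtain ⟨V, rfl⟩ := exists_foldH_eq hq hΦ
  have hΨ : (fun ζ l => KkM q hq τ c0 α G U0 rbar k μ β p (tOf q p) (nOf q p) (foldH q V) ζ l
      + δ • foldH q V ζ l) = foldH q (fun j => LkMop τ c0 α G U0 rbar k μ β p q V j + δ • V j) := by
    rw [KkM_foldH hq τ c0 α G U0 rbar k μ β (tOf_add_nOf_mul q p)]
    rfl
  rw [hΨ, DkH_foldH, normH_foldH hq, normH_foldH hq, normH_foldH hq]
  exact sq_mul_normY_DkY_sq_le hHS1.summable_norm hK0 hK k μ β p q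
    (abs_le.2 ⟨by linarith, hδ1.le⟩) (memY_of_memH_foldH hq hmem)

/-- Under (HS1), (HS2), (HS3_r̄), (HW1_r̄) and (HW2_r̄), for fixed
`1 ≤ k ≤ 6` and `q ≥ 1` there is `C₁ > 0` so that for every `M = p/q ∈ ℳ_q`, every
`0 < δ < 1` and every `Φ ∈ ℋ¹_{k,M}`, with `Ψ = 𝒦_{k,M}Φ + δΦ`,
`2‖Ψ‖²_{ℋ_M} + 2C₁‖Φ‖²_{ℋ_M} ≥ c̄₀² ‖D_{k,M}Φ‖²_{ℋ_M}`. -/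
theorem statement_10
    {d ddiff : ℕ} {τ ν : ℝ} {α : ℕ → Vec d} {G : Vec d → ℝ → Vec d} {Pm Pp : Vec d}
    {rbar c0 : ℝ} {U0 U0' Φp Φp' Φm Φm' : ℝ → Vec d} {lamT : ℝ}
    (hHS1 : HS1 d ddiff τ α ν) (hHS2 : HS2 d G Pm Pp)
    (hrbar : rbar ∈ Set.Ioo (0 : ℝ) 1)
    (hHS3 : HS3 ddiff G Pm Pp rbar)
    (hHW1 : HW1 τ α G Pm Pp rbar c0 U0 U0')
    (hHW2 : HW2 τ c0 α G U0 U0' rbar Φp Φp' Φm Φm' lamT)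
    (k : ℕ) (hk1 : 1 ≤ k) (hk6 : k ≤ 6) (q : ℕ) (hq : 0 < q)
    (μ : ℕ → ℝ) (β : ℝ) (hBDF : BDFcoeff k μ β) :
    ∃ C1 : ℝ, 0 < C1 ∧
      ∀ p : ℕ, Nat.Coprime p q → q ≤ p →
      ∀ δ : ℝ, 0 < δ → δ < 1 →
      ∀ Φ : Fin (q + 1) → ℤ → Vec d, HConstraint q Φ → MemH q Φ →
        c0 ^ 2 * (normH q ((p : ℝ) / q) (DkH q k μ β ((p : ℝ) / q) Φ)) ^ 2 ≤
          2 * (normH q ((p : ℝ) / q)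
              (fun ζ l => KkM q hq τ c0 α G U0 rbar k μ β p (tOf q p) (nOf q p) Φ ζ l
                + δ • Φ ζ l)) ^ 2
            + 2 * C1 * (normH q ((p : ℝ) / q) Φ) ^ 2 :=
  statement_10_general hHS1 hHS2 hrbar hHW1 k q hq μ β
end
end

section
/- Assume (HS1) holds. Fix an integer q ≥ 1 and a sequence {M_j}_{j∈ℕ} in ℳ_q with lim_{j→∞} M_j = ∞ and with constant rotation number, i.e. θ(M_j) = θ for all j ∈ ℕ and some θ ∈ q^{-1}{1,…,q}. Then for every smooth compactly supported function Z ∈ C_c^∞(ℝ; ℓ²_{q,⊥;∞}) one has lim_{j→∞} ‖Δ_{M_j}Z − Δ_{q,θ}Z‖_{L²(ℝ,ℓ²_{q,⊥})} = 0. -/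
open MeasureTheory Filter Topology

noncomputable section

variable {d : ℕ}

lemma st19_dotV_self_nonneg {d : ℕ} (x : Vec d) : 0 ≤ dotV x x :=
  Finset.sum_nonneg fun i _ => mul_self_nonneg _

lemma st19_dotV_self_le {d : ℕ} (x : Vec d) (c : ℝ) (h : ∀ i, |x i| ≤ c) :
    dotV x x ≤ (d : ℝ) * c ^ 2 := by
  have hb : ∀ i ∈ (Finset.univ : Finset (Fin d)), x i * x i ≤ c ^ 2 := by
    intro i _
    calc x i * x i = |x i| * |x i| := (abs_mul_abs_self _).symm
      _ ≤ c * c := mul_self_le_mul_self (abs_nonneg _) (h i)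
      _ = c ^ 2 := (sq c).symm
  calc dotV x x ≤ (Finset.univ : Finset (Fin d)).card • (c ^ 2) :=
        Finset.sum_le_card_nsmul _ _ _ hb
    _ = (d : ℝ) * c ^ 2 := by simp [nsmul_eq_mul]

lemma st19_innerPerp_self_nonneg {d q : ℕ} (Φ : Fin (q + 1) → Vec d) :
    0 ≤ innerPerp q Φ Φ := by
  unfold innerPerp
  have h0 := st19_dotV_self_nonneg (Φ 0)
  have h1 := st19_dotV_self_nonneg (Φ (Fin.last q))
  have hs : 0 ≤ ∑ ζ ∈ Finset.Ioo (0 : Fin (q + 1)) (Fin.last q), dotV (Φ ζ) (Φ ζ) :=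
    Finset.sum_nonneg fun ζ _ => st19_dotV_self_nonneg _
  have : (0:ℝ) ≤ (q : ℝ)⁻¹ := by positivity
  apply mul_nonneg this (by linarith)

lemma st19_innerPerp_self_le {d q : ℕ} (Φ : Fin (q + 1) → Vec d) (c : ℝ) (hc : 0 ≤ c)
    (h : ∀ ζ i, |Φ ζ i| ≤ c) :
    innerPerp q Φ Φ ≤ (q : ℝ)⁻¹ * ((((q : ℝ) + 2)) * ((d : ℝ) * c ^ 2)) := by
  have hX : ∀ ζ, dotV (Φ ζ) (Φ ζ) ≤ (d : ℝ) * c ^ 2 := fun ζ => st19_dotV_self_le _ c (h ζ)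
  have hXnn : (0:ℝ) ≤ (d : ℝ) * c ^ 2 := by positivity
  have hcard : ((Finset.Ioo (0 : Fin (q + 1)) (Fin.last q)).card : ℝ) ≤ (q : ℝ) + 1 := by
    have h1 := Finset.card_le_univ (Finset.Ioo (0 : Fin (q + 1)) (Fin.last q))
    have h2 : (Finset.Ioo (0 : Fin (q + 1)) (Fin.last q)).card ≤ q + 1 := by simpa using h1
    exact_mod_cast h2
  have hs : ∑ ζ ∈ Finset.Ioo (0 : Fin (q + 1)) (Fin.last q), dotV (Φ ζ) (Φ ζ)
      ≤ ((q : ℝ) + 1) * ((d : ℝ) * c ^ 2) := by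
    calc _ ≤ (Finset.Ioo (0 : Fin (q + 1)) (Fin.last q)).card • ((d : ℝ) * c ^ 2) :=
          Finset.sum_le_card_nsmul _ _ _ (fun ζ _ => hX ζ)
      _ = ((Finset.Ioo (0 : Fin (q + 1)) (Fin.last q)).card : ℝ) * ((d : ℝ) * c ^ 2) := by
          simp [nsmul_eq_mul]
      _ ≤ _ := mul_le_mul_of_nonneg_right hcard hXnn
  unfold innerPerp
  have : (0:ℝ) ≤ (q : ℝ)⁻¹ := by positivity
  apply mul_le_mul_of_nonneg_left _ this
  have h0 := hX 0
  have h1 := hX (Fin.last q)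
  linarith

lemma st19_integrable_exp_neg_abs {b : ℝ} (hb : 0 < b) :
    Integrable (fun x : ℝ => Real.exp (-b * |x|)) := by
  have h1 : IntegrableOn (fun x : ℝ => Real.exp (-b * |x|)) (Set.Ici 0) := by
    rw [integrableOn_Ici_iff_integrableOn_Ioi]
    exact (exp_neg_integrableOn_Ioi 0 hb).congr_fun
      (fun x hx => by rw [abs_of_nonneg (le_of_lt hx)]) measurableSet_Ioi
  have h2 : IntegrableOn (fun x : ℝ => Real.exp (-b * |x|)) (Set.Iic 0) := by
    have h3 := (MeasurePreserving.integrableOn_comp_preimage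
      (Measure.measurePreserving_neg (volume : Measure ℝ))
      (Homeomorph.neg ℝ).measurableEmbedding).2 h1
    have hset : (Neg.neg ⁻¹' (Set.Ici (0:ℝ))) = Set.Iic 0 := by
      ext x; simp
    have hfun : ((fun x : ℝ => Real.exp (-b * |x|)) ∘ Neg.neg)
        = (fun x : ℝ => Real.exp (-b * |x|)) := by
      funext x; simp [Function.comp, abs_neg]
    rwa [hset, hfun] at h3
  have h3 := h2.union h1
  rwa [Set.Iic_union_Ici, integrableOn_univ] at h3

lemma st19_nOf_mul_add_tOf (q p : ℕ) (hq : 0 < q) (hcop : Nat.Coprime p q) :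
    nOf q p * (q : ℤ) + tOf q p = (p : ℤ) := by
  have hq0 : (q : ℤ) ≠ 0 := by exact_mod_cast hq.ne'
  have hdvd : (q : ℤ) ∣ (p : ℤ) - tOf q p := by
    unfold tOf
    by_cases h : p % q = 0
    · have hq1 : q = 1 :=
        Nat.dvd_one.mp (hcop ▸ Nat.dvd_gcd (Nat.dvd_of_mod_eq_zero h) dvd_rfl)
      simp [hq1]
    · simp only [if_neg h]
      have hmod : ((p % q : ℕ) : ℤ) = (p : ℤ) % (q : ℤ) := by push_cast; ring_nf
      rw [hmod]
      have := Int.mul_ediv_add_emod (p : ℤ) (q : ℤ)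
      exact ⟨(p : ℤ) / (q : ℤ), by linarith⟩
  unfold nOf
  have := Int.ediv_mul_cancel hdvd
  linarith

lemma st19_abs3 (x y z : ℝ) : |x + y - 2 * z| ≤ |x| + |y| + 2 * |z| := by
  have h0 : x + y - 2 * z = (x + y) + (-(2 * z)) := by ring
  rw [h0]
  calc |(x + y) + (-(2 * z))| ≤ |x + y| + |(-(2 * z))| := abs_add_le _ _
    _ = |x + y| + 2 * |z| := by rw [abs_neg, abs_mul, abs_two]
    _ ≤ |x| + |y| + 2 * |z| := by linarith [abs_add_le x y]



set_option maxHeartbeats 1600000 in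
/-- Under (HS1), for any sequence `{M_j} ⊂ ℳ_q` with `M_j → ∞` and
constant rotation number `θ(M_j) = θ` (twist datum `t = θq`), and any smooth compactly
supported `Z ∈ C_c^∞(ℝ; ℓ²_{q,⊥;∞})`, one has `‖Δ_{M_j}Z − Δ_{q,θ}Z‖_{L²(ℝ,ℓ²_{q,⊥})} → 0`. -/
theorem statement_19
    {d ddiff : ℕ} {τ ν : ℝ} {α : ℕ → Vec d}
    (hHS1 : HS1 d ddiff τ α ν)
    (q : ℕ) (hq : 0 < q)
    (pseq : ℕ → ℕ) (hcop : ∀ j : ℕ, Nat.Coprime (pseq j) q) (hpq : ∀ j : ℕ, q ≤ pseq j)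
    (hMtop : Tendsto (fun j : ℕ => ((pseq j : ℝ) / q)) atTop atTop)
    (t : ℤ) (htconst : ∀ j : ℕ, tOf q (pseq j) = t)
    (Z : Fin (q + 1) → ℝ → Vec d)
    (hsmooth : ∀ ζ, ContDiff ℝ (⊤ : ℕ∞) (Z ζ))
    (hsupp : ∀ ζ, HasCompactSupport (Z ζ))
    (hconstr : ∀ ξ : ℝ, Z (Fin.last q) ξ = Z 0 ξ) :
    Tendsto (fun j : ℕ => normL2perp q (fun ζ ξ =>
        ΔMcont q hq τ α t (nOf q (pseq j)) ((q : ℝ) / pseq j) Z ζ ξ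
          - ΔQθ q hq τ α t Z ζ ξ)) atTop (nhds 0) := by
  classical
  have τpos := hHS1.τ_pos
  have hν := hHS1.ν_pos
  have hq' : (0:ℝ) < q := by exact_mod_cast hq
  -- uniform support radius
  have hZR : ∀ ζ : Fin (q + 1), ∃ Rz : ℝ, 0 ≤ Rz ∧ ∀ x : ℝ, Rz < |x| → Z ζ x = 0 := by
    intro ζ
    obtain ⟨C, hC⟩ := ((hsupp ζ).isBounded).exists_norm_le
    refine ⟨max C 0, le_max_right _ _, fun x hx => ?_⟩
    apply image_eq_zero_of_notMem_tsupport
    intro hxmem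
    have h1 := hC x hxmem
    rw [Real.norm_eq_abs] at h1
    have h2 := le_max_left C 0
    linarith
  choose Rf hRf0 hRfz using hZR
  obtain ⟨Rm, hRm⟩ : ∃ Rm : ℝ, ∀ ζ, Rf ζ ≤ Rm :=
    ⟨Finset.univ.sup' Finset.univ_nonempty Rf, fun ζ => Finset.le_sup' Rf (Finset.mem_univ ζ)⟩
  set R : ℝ := max Rm 0 with hRdef
  have hR0 : 0 ≤ R := le_max_right _ _
  have hZzero : ∀ (ζ : Fin (q + 1)) (x : ℝ), R < |x| → Z ζ x = 0 := fun ζ x hx =>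
    hRfz ζ x (lt_of_le_of_lt (le_trans (hRm ζ) (le_max_left _ _)) hx)
  -- uniform Lipschitz constant
  have hZL : ∀ ζ : Fin (q + 1), ∃ Lz : ℝ, 0 ≤ Lz ∧
      ∀ a b : ℝ, ‖Z ζ a - Z ζ b‖ ≤ Lz * |a - b| := by
    intro ζ
    have hdiff : Differentiable ℝ (Z ζ) := (hsmooth ζ).differentiable (by simp)
    have hcd : Continuous (deriv (Z ζ)) := (hsmooth ζ).continuous_deriv (by simp)
    obtain ⟨C, hC⟩ := hcd.bounded_above_of_compact_support (hsupp ζ).deriv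
    have hC0 : 0 ≤ C := le_trans (norm_nonneg _) (hC 0)
    have hlip : LipschitzWith C.toNNReal (Z ζ) := by
      refine lipschitzWith_of_nnnorm_deriv_le hdiff (fun x => ?_)
      rw [← NNReal.coe_le_coe, coe_nnnorm, Real.coe_toNNReal C hC0]
      exact hC x
    refine ⟨C, hC0, fun a b => ?_⟩
    have h3 := hlip.dist_le_mul a b
    rwa [dist_eq_norm, Real.dist_eq, Real.coe_toNNReal C hC0] at h3
  choose Lf hLf0 hLf using hZL
  obtain ⟨Lm, hLm⟩ : ∃ Lm : ℝ, ∀ ζ, Lf ζ ≤ Lm :=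
    ⟨Finset.univ.sup' Finset.univ_nonempty Lf, fun ζ => Finset.le_sup' Lf (Finset.mem_univ ζ)⟩
  set L : ℝ := max Lm 0 with hLdef
  have hL0 : 0 ≤ L := le_max_right _ _
  have hZLip : ∀ (ζ : Fin (q + 1)) (a b : ℝ) (i : Fin d),
      |Z ζ a i - Z ζ b i| ≤ L * |a - b| := by
    intro ζ a b i
    have h1 : |Z ζ a i - Z ζ b i| ≤ ‖Z ζ a - Z ζ b‖ := by
      simpa [Real.norm_eq_abs] using norm_le_pi_norm (Z ζ a - Z ζ b) i
    have h2 := hLf ζ a b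
    have h3 : Lf ζ * |a - b| ≤ L * |a - b| :=
      mul_le_mul_of_nonneg_right (le_trans (hLm ζ) (le_max_left _ _)) (abs_nonneg _)
    linarith
  -- uniform sup bound
  have hZBd : ∀ ζ : Fin (q + 1), ∃ Bz : ℝ, ∀ x : ℝ, ‖Z ζ x‖ ≤ Bz := fun ζ =>
    (hsmooth ζ).continuous.bounded_above_of_compact_support (hsupp ζ)
  choose Bf hBf using hZBd
  obtain ⟨B, hBm⟩ : ∃ B : ℝ, ∀ ζ, Bf ζ ≤ B :=
    ⟨Finset.univ.sup' Finset.univ_nonempty Bf, fun ζ => Finset.le_sup' Bf (Finset.mem_univ ζ)⟩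
  have hB0 : 0 ≤ B := le_trans (norm_nonneg (Z 0 0)) (le_trans (hBf 0 0) (hBm 0))
  have hZB : ∀ (ζ : Fin (q + 1)) (x : ℝ) (i : Fin d), |Z ζ x i| ≤ B := by
    intro ζ x i
    have h1 : |Z ζ x i| ≤ ‖Z ζ x‖ := by
      simpa [Real.norm_eq_abs] using norm_le_pi_norm (Z ζ x) i
    exact le_trans h1 (le_trans (hBf ζ x) (hBm ζ))
  -- summability data
  have hSsum : Summable (fun m : ℕ => ‖α (m + 1)‖ * Real.exp (((m : ℝ) + 1) * ν)) :=
    hHS1.exp_summable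
  set S : ℝ := ∑' m : ℕ, ‖α (m + 1)‖ * Real.exp (((m : ℝ) + 1) * ν) with hSdef
  have hS0 : 0 ≤ S := tsum_nonneg fun m => mul_nonneg (norm_nonneg _) (Real.exp_pos _).le
  have hνsum : Summable (fun m : ℕ => ‖α (m + 1)‖) := by
    refine Summable.of_nonneg_of_le (fun m => norm_nonneg _) (fun m => ?_) hSsum
    exact le_mul_of_one_le_right (norm_nonneg _) (Real.one_le_exp (by positivity))
  have hαi : ∀ (m : ℕ) (i : Fin d), |α (m + 1) i| ≤ ‖α (m + 1)‖ := fun m i => by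
    simpa [Real.norm_eq_abs] using norm_le_pi_norm (α (m + 1)) i
  -- constants
  set c0 : ℝ := τ * (4 * (q : ℝ) * L) * Real.exp (ν * (R + 2)) * S with hc0def
  have hc00 : 0 ≤ c0 :=
    mul_nonneg (mul_nonneg (mul_nonneg τpos.le (by positivity)) (Real.exp_pos _).le) hS0
  set J : ℝ := ∫ ξ : ℝ, Real.exp (-(2 * ν) * |ξ|) with hJdef
  have hJint : Integrable (fun ξ : ℝ => Real.exp (-(2 * ν) * |ξ|)) :=
    st19_integrable_exp_neg_abs (by linarith)
  have hJ0 : 0 ≤ J := integral_nonneg fun ξ => (Real.exp_pos _).le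
  have hsqexp : ∀ x : ℝ, Real.exp x ^ 2 = Real.exp (2 * x) := fun x => by
    rw [show (2:ℝ) * x = x + x by ring, Real.exp_add, sq]
  -- per-j estimate
  have key : ∀ j : ℕ,
      normL2perp q (fun ζ ξ =>
          ΔMcont q hq τ α t (nOf q (pseq j)) ((q : ℝ) / pseq j) Z ζ ξ
            - ΔQθ q hq τ α t Z ζ ξ)
        ≤ (Real.sqrt ((q : ℝ)⁻¹ * (((q : ℝ) + 2) * (d : ℝ)) * J) * c0) * ((pseq j : ℝ))⁻¹ := by
    intro j
    set p : ℕ := pseq j with hpdef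
    have hqp : q ≤ p := hpq j
    have hp0 : (0 : ℝ) < (p : ℝ) := by
      have hh : 0 < p := lt_of_lt_of_le hq hqp
      exact_mod_cast hh
    have hnt : nOf q p * (q : ℤ) + t = (p : ℤ) := by
      have hh := st19_nOf_mul_add_tOf q p hq (hcop j)
      rwa [htconst j] at hh
    have hPr : (p : ℝ) = ((nOf q p : ℤ) : ℝ) * (q : ℝ) + ((t : ℤ) : ℝ) := by
      exact_mod_cast hnt.symm
    set n : ℤ := nOf q p with hndef
    -- pointwise bound
    have hpoint : ∀ (ζ : Fin (q + 1)) (ξ : ℝ) (i : Fin d),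
        |(ΔMcont q hq τ α t n ((q : ℝ) / p) Z ζ ξ - ΔQθ q hq τ α t Z ζ ξ) i|
          ≤ c0 * (p : ℝ)⁻¹ * Real.exp (-ν * |ξ|) := by
      intro ζ ξ i
      rw [Pi.sub_apply]
      have key2 : ∀ (c : Fin (q + 1)) (a b : ℝ) (m : ℕ), |a - b| ≤ 2 * (q : ℝ) / p →
          |ξ| ≤ |b| + ((m : ℝ) + 1) →
          |Z c a i - Z c b i| ≤ 2 * (q : ℝ) * L / p *
            (Real.exp (((m : ℝ) + 1) * ν) * Real.exp (ν * (R + 2)) *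
              Real.exp (-ν * |ξ|)) := by
        intro c a b m hab hxb
        have h2qp : 2 * (q : ℝ) / p ≤ 2 := by
          rw [div_le_iff₀ hp0]
          have hc : (q : ℝ) ≤ (p : ℝ) := by exact_mod_cast hqp
          linarith
        by_cases hb : |b| ≤ R + 2
        · have h1 : (1 : ℝ) ≤ Real.exp (((m : ℝ) + 1) * ν) * Real.exp (ν * (R + 2)) *
              Real.exp (-ν * |ξ|) := by
            rw [← Real.exp_add, ← Real.exp_add]
            apply Real.one_le_exp
            nlinarith [mul_nonneg hν.le
              (show (0:ℝ) ≤ ((m : ℝ) + 1) + (R + 2) - |ξ| by linarith)]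
          have h2 : |Z c a i - Z c b i| ≤ 2 * (q : ℝ) * L / p := by
            calc |Z c a i - Z c b i| ≤ L * |a - b| := hZLip c a b i
              _ ≤ L * (2 * (q : ℝ) / p) := mul_le_mul_of_nonneg_left hab hL0
              _ = 2 * (q : ℝ) * L / p := by ring
          calc |Z c a i - Z c b i| ≤ 2 * (q : ℝ) * L / p := h2
            _ = 2 * (q : ℝ) * L / p * 1 := by ring
            _ ≤ _ := by
                apply mul_le_mul_of_nonneg_left h1
                exact div_nonneg (mul_nonneg (by positivity) hL0) hp0.le
        · push_neg at hb
          have ha : R < |a| := by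
            have h3 : |b| - |a - b| ≤ |a| := by
              have h4 := abs_sub_abs_le_abs_sub b a
              rw [abs_sub_comm] at h4
              linarith
            linarith
          have hZa : Z c a i = 0 := by rw [hZzero c a ha]; rfl
          have hZb : Z c b i = 0 := by rw [hZzero c b (by linarith : R < |b|)]; rfl
          rw [hZa, hZb, sub_self, abs_zero]
          have hnn1 : (0:ℝ) ≤ 2 * (q : ℝ) * L / p :=
            div_nonneg (mul_nonneg (by positivity) hL0) hp0.le
          exact mul_nonneg hnn1 (by positivity)
      set f1 : ℕ → ℝ := fun m => α (m + 1) i *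
        (extContM q hq ((q : ℝ) / p) Z (((ζ : ℕ) : ℤ) + ((m : ℤ) + 1) * t)
            (ξ + ((m : ℝ) + 1) * (n : ℝ) * ((q : ℝ) / p)) i
          + extContM q hq ((q : ℝ) / p) Z (((ζ : ℕ) : ℤ) - ((m : ℤ) + 1) * t)
            (ξ - ((m : ℝ) + 1) * (n : ℝ) * ((q : ℝ) / p)) i
          - 2 * Z ζ ξ i) with hf1def
      set f2 : ℕ → ℝ := fun m => α (m + 1) i *
        (extPer q hq Z (((ζ : ℕ) : ℤ) + ((m : ℤ) + 1) * t) (ξ + ((m : ℝ) + 1)) i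
          + extPer q hq Z (((ζ : ℕ) : ℤ) - ((m : ℤ) + 1) * t) (ξ - ((m : ℝ) + 1)) i
          - 2 * Z ζ ξ i) with hf2def
      have hrepr : ΔMcont q hq τ α t n ((q : ℝ) / p) Z ζ ξ i - ΔQθ q hq τ α t Z ζ ξ i
          = τ * ∑' m, f1 m - τ * ∑' m, f2 m := rfl
      have hb1 : ∀ m, |f1 m| ≤ ‖α (m + 1)‖ * (4 * B) := by
        intro m
        simp only [hf1def]
        rw [abs_mul]
        apply mul_le_mul (hαi m i) _ (abs_nonneg _) (norm_nonneg _)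
        have h1 : |extContM q hq ((q : ℝ) / p) Z (((ζ : ℕ) : ℤ) + ((m : ℤ) + 1) * t)
            (ξ + ((m : ℝ) + 1) * (n : ℝ) * ((q : ℝ) / p)) i| ≤ B := hZB _ _ i
        have h2 : |extContM q hq ((q : ℝ) / p) Z (((ζ : ℕ) : ℤ) - ((m : ℤ) + 1) * t)
            (ξ - ((m : ℝ) + 1) * (n : ℝ) * ((q : ℝ) / p)) i| ≤ B := hZB _ _ i
        have h3 := hZB ζ ξ i
        have h4 := st19_abs3 (extContM q hq ((q : ℝ) / p) Z (((ζ : ℕ) : ℤ) + ((m : ℤ) + 1) * t)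
            (ξ + ((m : ℝ) + 1) * (n : ℝ) * ((q : ℝ) / p)) i)
          (extContM q hq ((q : ℝ) / p) Z (((ζ : ℕ) : ℤ) - ((m : ℤ) + 1) * t)
            (ξ - ((m : ℝ) + 1) * (n : ℝ) * ((q : ℝ) / p)) i) (Z ζ ξ i)
        linarith
      have hb2 : ∀ m, |f2 m| ≤ ‖α (m + 1)‖ * (4 * B) := by
        intro m
        simp only [hf2def]
        rw [abs_mul]
        apply mul_le_mul (hαi m i) _ (abs_nonneg _) (norm_nonneg _)
        have h1 : |extPer q hq Z (((ζ : ℕ) : ℤ) + ((m : ℤ) + 1) * t)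
            (ξ + ((m : ℝ) + 1)) i| ≤ B := hZB _ _ i
        have h2 : |extPer q hq Z (((ζ : ℕ) : ℤ) - ((m : ℤ) + 1) * t)
            (ξ - ((m : ℝ) + 1)) i| ≤ B := hZB _ _ i
        have h3 := hZB ζ ξ i
        have h4 := st19_abs3 (extPer q hq Z (((ζ : ℕ) : ℤ) + ((m : ℤ) + 1) * t)
            (ξ + ((m : ℝ) + 1)) i)
          (extPer q hq Z (((ζ : ℕ) : ℤ) - ((m : ℤ) + 1) * t) (ξ - ((m : ℝ) + 1)) i) (Z ζ ξ i)
        linarith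
      have hsum1 : Summable f1 := by
        refine Summable.of_norm_bounded (hνsum.mul_right (4 * B)) (fun m => ?_)
        rw [Real.norm_eq_abs]; exact hb1 m
      have hsum2 : Summable f2 := by
        refine Summable.of_norm_bounded (hνsum.mul_right (4 * B)) (fun m => ?_)
        rw [Real.norm_eq_abs]; exact hb2 m
      set W : ℕ → ℝ := fun m =>
        (4 * (q : ℝ) * L / p * Real.exp (ν * (R + 2)) * Real.exp (-ν * |ξ|)) *
          (‖α (m + 1)‖ * Real.exp (((m : ℝ) + 1) * ν)) with hWdef
      have hWsum : Summable W := hSsum.mul_left _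
      have hdiffb : ∀ m, |f1 m - f2 m| ≤ W m := by
        intro m
        -- plus-side two-point bound
        have hIbP : |(q : ℤ) * ((((ζ : ℕ) : ℤ) + ((m : ℤ) + 1) * t) / (q : ℤ))
            - ((m : ℤ) + 1) * t| ≤ 2 * (q : ℤ) := by
          have hde := Int.mul_ediv_add_emod (((ζ : ℕ) : ℤ) + ((m : ℤ) + 1) * t) (q : ℤ)
          have h0 := Int.emod_nonneg (((ζ : ℕ) : ℤ) + ((m : ℤ) + 1) * t)
            (by exact_mod_cast hq.ne' : (q : ℤ) ≠ 0)
          have h1 := Int.emod_lt_of_pos (((ζ : ℕ) : ℤ) + ((m : ℤ) + 1) * t)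
            (by exact_mod_cast hq : (0 : ℤ) < (q : ℤ))
          have hζ1 : (0 : ℤ) ≤ ((ζ : ℕ) : ℤ) := Int.natCast_nonneg _
          have hζ2 : ((ζ : ℕ) : ℤ) ≤ (q : ℤ) := by exact_mod_cast Fin.is_le ζ
          have hqZ : (0 : ℤ) < (q : ℤ) := by exact_mod_cast hq
          rw [abs_le]
          constructor <;> linarith
        have hIbM : |(q : ℤ) * ((((ζ : ℕ) : ℤ) - ((m : ℤ) + 1) * t) / (q : ℤ))
            + ((m : ℤ) + 1) * t| ≤ 2 * (q : ℤ) := by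
          have hde := Int.mul_ediv_add_emod (((ζ : ℕ) : ℤ) - ((m : ℤ) + 1) * t) (q : ℤ)
          have h0 := Int.emod_nonneg (((ζ : ℕ) : ℤ) - ((m : ℤ) + 1) * t)
            (by exact_mod_cast hq.ne' : (q : ℤ) ≠ 0)
          have h1 := Int.emod_lt_of_pos (((ζ : ℕ) : ℤ) - ((m : ℤ) + 1) * t)
            (by exact_mod_cast hq : (0 : ℤ) < (q : ℤ))
          have hζ1 : (0 : ℤ) ≤ ((ζ : ℕ) : ℤ) := Int.natCast_nonneg _
          have hζ2 : ((ζ : ℕ) : ℤ) ≤ (q : ℤ) := by exact_mod_cast Fin.is_le ζ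
          have hqZ : (0 : ℤ) < (q : ℤ) := by exact_mod_cast hq
          rw [abs_le]
          constructor <;> linarith
        have habP : |(ξ + ((m : ℝ) + 1) * (n : ℝ) * ((q : ℝ) / p)
              + (((((ζ : ℕ) : ℤ) + ((m : ℤ) + 1) * t) / (q : ℤ) : ℤ) : ℝ) * ((q : ℝ) / p))
            - (ξ + ((m : ℝ) + 1))| ≤ 2 * (q : ℝ) / p := by
          have hmul : ((ξ + ((m : ℝ) + 1) * (n : ℝ) * ((q : ℝ) / p)
              + (((((ζ : ℕ) : ℤ) + ((m : ℤ) + 1) * t) / (q : ℤ) : ℤ) : ℝ) * ((q : ℝ) / p))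
            - (ξ + ((m : ℝ) + 1))) * (p : ℝ)
              = (((q : ℤ) * ((((ζ : ℕ) : ℤ) + ((m : ℤ) + 1) * t) / (q : ℤ))
                - ((m : ℤ) + 1) * t : ℤ) : ℝ) := by
            have h1 : ((ξ + ((m : ℝ) + 1) * (n : ℝ) * ((q : ℝ) / p)
                + (((((ζ : ℕ) : ℤ) + ((m : ℤ) + 1) * t) / (q : ℤ) : ℤ) : ℝ) * ((q : ℝ) / p))
              - (ξ + ((m : ℝ) + 1))) * (p : ℝ)
                = (((m : ℝ) + 1) * (n : ℝ)
                    + (((((ζ : ℕ) : ℤ) + ((m : ℤ) + 1) * t) / (q : ℤ) : ℤ) : ℝ))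
                  * ((q : ℝ) / p * p) - ((m : ℝ) + 1) * (p : ℝ) := by ring
            rw [h1, div_mul_cancel₀ _ (ne_of_gt hp0), hPr]
            push_cast
            ring
          have heq : (ξ + ((m : ℝ) + 1) * (n : ℝ) * ((q : ℝ) / p)
              + (((((ζ : ℕ) : ℤ) + ((m : ℤ) + 1) * t) / (q : ℤ) : ℤ) : ℝ) * ((q : ℝ) / p))
            - (ξ + ((m : ℝ) + 1))
              = (((q : ℤ) * ((((ζ : ℕ) : ℤ) + ((m : ℤ) + 1) * t) / (q : ℤ))
                - ((m : ℤ) + 1) * t : ℤ) : ℝ) / p := by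
            rw [eq_div_iff (ne_of_gt hp0)]
            exact hmul
          rw [heq, abs_div, abs_of_pos hp0]
          have h2 : |(((q : ℤ) * ((((ζ : ℕ) : ℤ) + ((m : ℤ) + 1) * t) / (q : ℤ))
              - ((m : ℤ) + 1) * t : ℤ) : ℝ)| ≤ 2 * (q : ℝ) := by
            rw [← Int.cast_abs]
            exact_mod_cast hIbP
          exact div_le_div_of_nonneg_right h2 hp0.le
        have habM : |(ξ - ((m : ℝ) + 1) * (n : ℝ) * ((q : ℝ) / p)
              + (((((ζ : ℕ) : ℤ) - ((m : ℤ) + 1) * t) / (q : ℤ) : ℤ) : ℝ) * ((q : ℝ) / p))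
            - (ξ - ((m : ℝ) + 1))| ≤ 2 * (q : ℝ) / p := by
          have hmul : ((ξ - ((m : ℝ) + 1) * (n : ℝ) * ((q : ℝ) / p)
              + (((((ζ : ℕ) : ℤ) - ((m : ℤ) + 1) * t) / (q : ℤ) : ℤ) : ℝ) * ((q : ℝ) / p))
            - (ξ - ((m : ℝ) + 1))) * (p : ℝ)
              = (((q : ℤ) * ((((ζ : ℕ) : ℤ) - ((m : ℤ) + 1) * t) / (q : ℤ))
                + ((m : ℤ) + 1) * t : ℤ) : ℝ) := by
            have h1 : ((ξ - ((m : ℝ) + 1) * (n : ℝ) * ((q : ℝ) / p)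
                + (((((ζ : ℕ) : ℤ) - ((m : ℤ) + 1) * t) / (q : ℤ) : ℤ) : ℝ) * ((q : ℝ) / p))
              - (ξ - ((m : ℝ) + 1))) * (p : ℝ)
                = ((((((ζ : ℕ) : ℤ) - ((m : ℤ) + 1) * t) / (q : ℤ) : ℤ) : ℝ)
                    - ((m : ℝ) + 1) * (n : ℝ))
                  * ((q : ℝ) / p * p) + ((m : ℝ) + 1) * (p : ℝ) := by ring
            rw [h1, div_mul_cancel₀ _ (ne_of_gt hp0), hPr]
            push_cast
            ring
          have heq : (ξ - ((m : ℝ) + 1) * (n : ℝ) * ((q : ℝ) / p)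
              + (((((ζ : ℕ) : ℤ) - ((m : ℤ) + 1) * t) / (q : ℤ) : ℤ) : ℝ) * ((q : ℝ) / p))
            - (ξ - ((m : ℝ) + 1))
              = (((q : ℤ) * ((((ζ : ℕ) : ℤ) - ((m : ℤ) + 1) * t) / (q : ℤ))
                + ((m : ℤ) + 1) * t : ℤ) : ℝ) / p := by
            rw [eq_div_iff (ne_of_gt hp0)]
            exact hmul
          rw [heq, abs_div, abs_of_pos hp0]
          have h2 : |(((q : ℤ) * ((((ζ : ℕ) : ℤ) - ((m : ℤ) + 1) * t) / (q : ℤ))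
              + ((m : ℤ) + 1) * t : ℤ) : ℝ)| ≤ 2 * (q : ℝ) := by
            rw [← Int.cast_abs]
            exact_mod_cast hIbM
          exact div_le_div_of_nonneg_right h2 hp0.le
        have hxbP : |ξ| ≤ |ξ + ((m : ℝ) + 1)| + ((m : ℝ) + 1) := by
          have h0 : ξ = (ξ + ((m : ℝ) + 1)) + (-((m : ℝ) + 1)) := by ring
          calc |ξ| = |(ξ + ((m : ℝ) + 1)) + (-((m : ℝ) + 1))| := by rw [← h0]
            _ ≤ |ξ + ((m : ℝ) + 1)| + |(-((m : ℝ) + 1))| := abs_add_le _ _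
            _ = |ξ + ((m : ℝ) + 1)| + ((m : ℝ) + 1) := by
                rw [abs_neg, abs_of_nonneg (show (0:ℝ) ≤ (m : ℝ) + 1 by positivity)]
        have hxbM : |ξ| ≤ |ξ - ((m : ℝ) + 1)| + ((m : ℝ) + 1) := by
          have h0 : ξ = (ξ - ((m : ℝ) + 1)) + (((m : ℝ) + 1)) := by ring
          calc |ξ| = |(ξ - ((m : ℝ) + 1)) + (((m : ℝ) + 1))| := by rw [← h0]
            _ ≤ |ξ - ((m : ℝ) + 1)| + |(((m : ℝ) + 1))| := abs_add_le _ _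
            _ = |ξ - ((m : ℝ) + 1)| + ((m : ℝ) + 1) := by
                rw [abs_of_nonneg (by positivity : (0:ℝ) ≤ (m : ℝ) + 1)]
        have hplus : |extContM q hq ((q : ℝ) / p) Z (((ζ : ℕ) : ℤ) + ((m : ℤ) + 1) * t)
              (ξ + ((m : ℝ) + 1) * (n : ℝ) * ((q : ℝ) / p)) i
            - extPer q hq Z (((ζ : ℕ) : ℤ) + ((m : ℤ) + 1) * t) (ξ + ((m : ℝ) + 1)) i|
            ≤ 2 * (q : ℝ) * L / p *
              (Real.exp (((m : ℝ) + 1) * ν) * Real.exp (ν * (R + 2)) *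
                Real.exp (-ν * |ξ|)) :=
          key2 (zmodIdx q hq (((ζ : ℕ) : ℤ) + ((m : ℤ) + 1) * t))
            (ξ + ((m : ℝ) + 1) * (n : ℝ) * ((q : ℝ) / p)
              + (((((ζ : ℕ) : ℤ) + ((m : ℤ) + 1) * t) / (q : ℤ) : ℤ) : ℝ) * ((q : ℝ) / p))
            (ξ + ((m : ℝ) + 1)) m habP hxbP
        have hminus : |extContM q hq ((q : ℝ) / p) Z (((ζ : ℕ) : ℤ) - ((m : ℤ) + 1) * t)
              (ξ - ((m : ℝ) + 1) * (n : ℝ) * ((q : ℝ) / p)) i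
            - extPer q hq Z (((ζ : ℕ) : ℤ) - ((m : ℤ) + 1) * t) (ξ - ((m : ℝ) + 1)) i|
            ≤ 2 * (q : ℝ) * L / p *
              (Real.exp (((m : ℝ) + 1) * ν) * Real.exp (ν * (R + 2)) *
                Real.exp (-ν * |ξ|)) :=
          key2 (zmodIdx q hq (((ζ : ℕ) : ℤ) - ((m : ℤ) + 1) * t))
            (ξ - ((m : ℝ) + 1) * (n : ℝ) * ((q : ℝ) / p)
              + (((((ζ : ℕ) : ℤ) - ((m : ℤ) + 1) * t) / (q : ℤ) : ℤ) : ℝ) * ((q : ℝ) / p))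
            (ξ - ((m : ℝ) + 1)) m habM hxbM
        have e1 : f1 m - f2 m = α (m + 1) i *
            ((extContM q hq ((q : ℝ) / p) Z (((ζ : ℕ) : ℤ) + ((m : ℤ) + 1) * t)
                (ξ + ((m : ℝ) + 1) * (n : ℝ) * ((q : ℝ) / p)) i
              - extPer q hq Z (((ζ : ℕ) : ℤ) + ((m : ℤ) + 1) * t) (ξ + ((m : ℝ) + 1)) i)
            + (extContM q hq ((q : ℝ) / p) Z (((ζ : ℕ) : ℤ) - ((m : ℤ) + 1) * t)
                (ξ - ((m : ℝ) + 1) * (n : ℝ) * ((q : ℝ) / p)) i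
              - extPer q hq Z (((ζ : ℕ) : ℤ) - ((m : ℤ) + 1) * t) (ξ - ((m : ℝ) + 1)) i)) := by
          simp only [hf1def, hf2def]
          ring
        rw [e1, abs_mul]
        have hsum12 : |(extContM q hq ((q : ℝ) / p) Z (((ζ : ℕ) : ℤ) + ((m : ℤ) + 1) * t)
              (ξ + ((m : ℝ) + 1) * (n : ℝ) * ((q : ℝ) / p)) i
            - extPer q hq Z (((ζ : ℕ) : ℤ) + ((m : ℤ) + 1) * t) (ξ + ((m : ℝ) + 1)) i)
            + (extContM q hq ((q : ℝ) / p) Z (((ζ : ℕ) : ℤ) - ((m : ℤ) + 1) * t)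
                (ξ - ((m : ℝ) + 1) * (n : ℝ) * ((q : ℝ) / p)) i
              - extPer q hq Z (((ζ : ℕ) : ℤ) - ((m : ℤ) + 1) * t) (ξ - ((m : ℝ) + 1)) i)|
            ≤ 2 * (2 * (q : ℝ) * L / p *
              (Real.exp (((m : ℝ) + 1) * ν) * Real.exp (ν * (R + 2)) *
                Real.exp (-ν * |ξ|))) := by
          refine le_trans (abs_add_le _ _) ?_
          linarith
        refine le_trans (mul_le_mul (hαi m i) hsum12 (abs_nonneg _) (norm_nonneg _))
          (le_of_eq ?_)
        simp only [hWdef]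
        ring
      have hdsum : Summable fun m => |f1 m - f2 m| :=
        Summable.of_nonneg_of_le (fun m => abs_nonneg _) hdiffb hWsum
      rw [hrepr, ← mul_sub, ← hsum1.tsum_sub hsum2, abs_mul, abs_of_pos τpos]
      have htab : |∑' m, (f1 m - f2 m)| ≤ ∑' m, |f1 m - f2 m| := by
        simpa [Real.norm_eq_abs] using norm_tsum_le_tsum_norm
          (by simpa [Real.norm_eq_abs] using hdsum :
            Summable fun m => ‖f1 m - f2 m‖)
      have htt : ∑' m, |f1 m - f2 m| ≤ ∑' m, W m := Summable.tsum_le_tsum hdiffb hdsum hWsum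
      have hWt : ∑' m, W m
          = (4 * (q : ℝ) * L / p * Real.exp (ν * (R + 2)) * Real.exp (-ν * |ξ|)) * S := by
        simp only [hWdef, hSdef]
        exact tsum_mul_left
      calc τ * |∑' m, (f1 m - f2 m)| ≤ τ * ((4 * (q : ℝ) * L / p * Real.exp (ν * (R + 2))
            * Real.exp (-ν * |ξ|)) * S) := by
            apply mul_le_mul_of_nonneg_left _ τpos.le
            rw [← hWt]
            linarith
        _ = c0 * (p : ℝ)⁻¹ * Real.exp (-ν * |ξ|) := by
            simp only [hc0def]
            field_simp
    -- integral bound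
    set Θ : Fin (q + 1) → ℝ → Vec d := fun ζ ξ =>
      ΔMcont q hq τ α t n ((q : ℝ) / p) Z ζ ξ - ΔQθ q hq τ α t Z ζ ξ with hΘdef
    have hnn : ∀ ξ : ℝ, 0 ≤ innerPerp q (fun ζ => Θ ζ ξ) (fun ζ => Θ ζ ξ) :=
      fun ξ => st19_innerPerp_self_nonneg _
    have hle : ∀ ξ : ℝ, innerPerp q (fun ζ => Θ ζ ξ) (fun ζ => Θ ζ ξ)
        ≤ ((q : ℝ)⁻¹ * (((q : ℝ) + 2) * (d : ℝ)) * (c0 * (p : ℝ)⁻¹) ^ 2)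
          * Real.exp (-(2 * ν) * |ξ|) := by
      intro ξ
      have h1 := st19_innerPerp_self_le (fun ζ => Θ ζ ξ)
        (c0 * (p : ℝ)⁻¹ * Real.exp (-ν * |ξ|))
        (mul_nonneg (mul_nonneg hc00 (inv_nonneg.mpr hp0.le)) (Real.exp_pos _).le)
        (fun ζ i => hpoint ζ ξ i)
      have h2 : Real.exp (-(2 * ν) * |ξ|) = Real.exp (-ν * |ξ|) ^ 2 := by
        rw [hsqexp]
        congr 1
        ring
      rw [h2]
      calc innerPerp q (fun ζ => Θ ζ ξ) (fun ζ => Θ ζ ξ)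
          ≤ (q : ℝ)⁻¹ * (((q : ℝ) + 2)
            * ((d : ℝ) * (c0 * (p : ℝ)⁻¹ * Real.exp (-ν * |ξ|)) ^ 2)) := h1
        _ = ((q : ℝ)⁻¹ * (((q : ℝ) + 2) * (d : ℝ)) * (c0 * (p : ℝ)⁻¹) ^ 2)
            * Real.exp (-ν * |ξ|) ^ 2 := by ring
    have hgint : Integrable (fun ξ : ℝ =>
        ((q : ℝ)⁻¹ * (((q : ℝ) + 2) * (d : ℝ)) * (c0 * (p : ℝ)⁻¹) ^ 2)
          * Real.exp (-(2 * ν) * |ξ|)) := hJint.const_mul _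
    have hIb : innerL2perp q Θ Θ
        ≤ ((q : ℝ)⁻¹ * (((q : ℝ) + 2) * (d : ℝ)) * (c0 * (p : ℝ)⁻¹) ^ 2) * J := by
      have hmono := integral_mono_of_nonneg (Filter.Eventually.of_forall hnn) hgint
        (Filter.Eventually.of_forall hle)
      calc innerL2perp q Θ Θ
          = ∫ ξ : ℝ, innerPerp q (fun ζ => Θ ζ ξ) (fun ζ => Θ ζ ξ) := rfl
        _ ≤ ∫ ξ : ℝ, ((q : ℝ)⁻¹ * (((q : ℝ) + 2) * (d : ℝ)) * (c0 * (p : ℝ)⁻¹) ^ 2)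
            * Real.exp (-(2 * ν) * |ξ|) := hmono
        _ = _ := by
            rw [MeasureTheory.integral_const_mul]
    have hfin : normL2perp q Θ
        ≤ Real.sqrt ((q : ℝ)⁻¹ * (((q : ℝ) + 2) * (d : ℝ)) * J) * (c0 * (p : ℝ)⁻¹) := by
      have hKJ : (0:ℝ) ≤ (q : ℝ)⁻¹ * (((q : ℝ) + 2) * (d : ℝ)) * J :=
        mul_nonneg (by positivity) hJ0
      have hsq : innerL2perp q Θ Θ
          ≤ (Real.sqrt ((q : ℝ)⁻¹ * (((q : ℝ) + 2) * (d : ℝ)) * J) * (c0 * (p : ℝ)⁻¹)) ^ 2 := by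
        have h3 : (Real.sqrt ((q : ℝ)⁻¹ * (((q : ℝ) + 2) * (d : ℝ)) * J)
            * (c0 * (p : ℝ)⁻¹)) ^ 2
            = ((q : ℝ)⁻¹ * (((q : ℝ) + 2) * (d : ℝ)) * J) * (c0 * (p : ℝ)⁻¹) ^ 2 := by
          rw [mul_pow, Real.sq_sqrt hKJ]
        rw [h3]
        calc innerL2perp q Θ Θ
            ≤ ((q : ℝ)⁻¹ * (((q : ℝ) + 2) * (d : ℝ)) * (c0 * (p : ℝ)⁻¹) ^ 2) * J := hIb
          _ = _ := by ring
      calc normL2perp q Θ = Real.sqrt (innerL2perp q Θ Θ) := rfl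
        _ ≤ Real.sqrt ((Real.sqrt ((q : ℝ)⁻¹ * (((q : ℝ) + 2) * (d : ℝ)) * J)
            * (c0 * (p : ℝ)⁻¹)) ^ 2) := Real.sqrt_le_sqrt hsq
        _ = _ := Real.sqrt_sq (mul_nonneg (Real.sqrt_nonneg _)
            (mul_nonneg hc00 (inv_nonneg.mpr hp0.le)))
    exact hfin.trans (le_of_eq (by ring))
  -- pass to the limit
  have hPtop : Tendsto (fun j : ℕ => ((pseq j : ℝ))) atTop atTop := by
    have h1 := hMtop.atTop_mul_const hq'
    have h2 : (fun j : ℕ => ((pseq j : ℝ) / q) * q) = fun j : ℕ => (pseq j : ℝ) := by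
      funext j
      exact div_mul_cancel₀ _ (ne_of_gt hq')
    rwa [h2] at h1
  have hlim : Tendsto (fun j : ℕ =>
      (Real.sqrt ((q : ℝ)⁻¹ * (((q : ℝ) + 2) * (d : ℝ)) * J) * c0) * ((pseq j : ℝ))⁻¹)
      atTop (nhds 0) := by
    have h1 := hPtop.inv_tendsto_atTop
    have h2 := h1.const_mul (Real.sqrt ((q : ℝ)⁻¹ * (((q : ℝ) + 2) * (d : ℝ)) * J) * c0)
    simpa using h2
  refine squeeze_zero (fun j => ?_) key hlim
  exact Real.sqrt_nonneg _
end
end
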